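/- arXiv:2206.09172 — 9 statements merged into one kernel-verified Lean document; each statement's English description precedes it below -/
import Mathlib

section
/- (Singularity criterion of type B, k < n; the key step of the main theorem for B_n/P(α_k).) Let n ≥ 2 and 1 ≤ k ≤ n−1, and let a_1,…,a_n be nonnegative integers. Then for every integer t, there exists a positive root α ∈ Φ⁺_B with ⟨w(t), α⟩ = 0 if and only if t belongs to the step-matrix entry set S^B_{k,a}. -/
/-!
Write `w(t) = c - t (e₁ + ⋯ + e_k)` with `c = λ + ρ`. Since `a ≥ 0`, the coordinates of `c` are
positive and strictly decreasing, so `w(t)` is orthogonal to a positive root only for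
`eₚ - e_q` with `p ≤ k < q` (`t = c_p - c_q`), `eₚ + e_q` with `p ≤ k < q` (`t = c_p + c_q`), and
`eₚ + e_q` or `eₚ` with `p ≤ q ≤ k` (`2t = c_p + c_q`). The substitutions `i = k + 1 - p` together
with `j = q - k`, `j = n + 1 - q`, resp. `i = k + 1 - q`, `j = k + 1 - p` identify these three
families with the three families defining `S^B_{k,a}`.
-/

open Finset

/-- The positive roots of type `Bₙ`: `eₚ+e_q`, `eₚ-e_q` (`p<q`) and `eₚ`. -/
def PhiB (n : ℕ) : Set (Fin n → ℝ) :=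
  {α | ∃ p q : Fin n, p < q ∧
      α = fun i => (if i = p then (1:ℝ) else 0) + (if i = q then 1 else 0)} ∪
  {α | ∃ p q : Fin n, p < q ∧
      α = fun i => (if i = p then (1:ℝ) else 0) - (if i = q then 1 else 0)} ∪
  {α | ∃ p : Fin n, α = fun i => if i = p then (1:ℝ) else 0}

/-- Standard inner product on `ℝⁿ`. -/
noncomputable def ip (n : ℕ) (v w : Fin n → ℝ) : ℝ := ∑ i, v i * w i

/-- The coordinate form of the weight `λ+ρ-tλ_k` for type `Bₙ`, `k < n`
(coordinates are indexed one-based). -/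
noncomputable def wB (n k : ℕ) (a : ℕ → ℤ) (t : ℤ) : Fin n → ℝ := fun i =>
  (∑ u ∈ Icc (i.val + 1) (n - 1), (a u : ℝ)) + ((a n : ℝ) + 1) / 2
    + ((n : ℝ) - (i.val + 1)) - (if i.val + 1 ≤ k then (t : ℝ) else 0)

/-- The step-matrix entry set `S^B_{k,a}`. -/
def SB (n k : ℕ) (a : ℕ → ℤ) : Set ℚ :=
  {x | ∃ i j : ℕ, 1 ≤ i ∧ i ≤ k ∧ 1 ≤ j ∧ j ≤ n - k ∧
    x = (∑ u ∈ Icc (k + 1 - i) (k + j - 1), (a u : ℚ)) + i + j - 1} ∪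
  {x | ∃ i j : ℕ, 1 ≤ i ∧ i ≤ k ∧ 1 ≤ j ∧ j ≤ n - k ∧
    x = (∑ u ∈ Icc (k + 1 - i) (n - 1), (a u : ℚ))
      + (∑ u ∈ Icc (n + 1 - j) (n - 1), (a u : ℚ)) + (a n : ℚ)
      + n - k + i + j - 1} ∪
  {x | ∃ i j : ℕ, 1 ≤ i ∧ i ≤ j ∧ j ≤ k ∧
    x = ((∑ u ∈ Icc (k + 1 - i) (n - 1), (a u : ℚ))
      + (∑ u ∈ Icc (k + 1 - j) (n - 1), (a u : ℚ)) + (a n : ℚ)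
      + i + j + 2 * n - 2 * k - 1) / 2}

/-- The coordinate of `λ + ρ` at the zero-based index `p` (the paper's `i = p + 1`). -/
noncomputable def coordB (n : ℕ) (a : ℕ → ℤ) (p : ℕ) : ℝ :=
  (∑ u ∈ Icc (p + 1) (n - 1), (a u : ℝ)) + ((a n : ℝ) + 1) / 2 + ((n : ℝ) - (p + 1))

def IsStepEntryB (n k : ℕ) (a : ℕ → ℤ) (x : ℝ) : Prop :=
  (∃ p q, p < k ∧ k ≤ q ∧ q < n ∧ x = coordB n a p - coordB n a q) ∨
  (∃ p q, p < k ∧ k ≤ q ∧ q < n ∧ x = coordB n a p + coordB n a q) ∨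
  (∃ p q, p ≤ q ∧ q < k ∧ 2 * x = coordB n a p + coordB n a q)

section Roots

variable {n : ℕ} (w : Fin n → ℝ)

lemma ip_single (p : Fin n) : ip n w (fun i => if i = p then (1 : ℝ) else 0) = w p := by
  simp [ip]

lemma ip_single_add_single (p q : Fin n) :
    ip n w (fun i => (if i = p then (1 : ℝ) else 0) + (if i = q then 1 else 0)) = w p + w q := by
  simp [ip, mul_add, sum_add_distrib]

lemma ip_single_sub_single (p q : Fin n) :
    ip n w (fun i => (if i = p then (1 : ℝ) else 0) - (if i = q then 1 else 0)) = w p - w q := by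
  simp [ip, mul_sub, sum_sub_distrib]

lemma exists_mem_PhiB_ip_eq_zero_iff :
    (∃ α ∈ PhiB n, ip n w α = 0) ↔
      (∃ p q, p < q ∧ w p + w q = 0) ∨ (∃ p q, p < q ∧ w p = w q) ∨ ∃ p, w p = 0 := by
  constructor
  · rintro ⟨α, (⟨p, q, hpq, rfl⟩ | ⟨p, q, hpq, rfl⟩) | ⟨p, rfl⟩, h⟩
    · exact .inl ⟨p, q, hpq, by rwa [ip_single_add_single] at h⟩
    · exact .inr <| .inl ⟨p, q, hpq, sub_eq_zero.1 <| by rwa [ip_single_sub_single] at h⟩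
    · exact .inr <| .inr ⟨p, by rwa [ip_single] at h⟩
  · rintro (⟨p, q, hpq, h⟩ | ⟨p, q, hpq, h⟩ | ⟨p, h⟩)
    · exact ⟨_, .inl <| .inl ⟨p, q, hpq, rfl⟩, by rwa [ip_single_add_single]⟩
    · exact ⟨_, .inl <| .inr ⟨p, q, hpq, rfl⟩, by rw [ip_single_sub_single, h, sub_self]⟩
    · exact ⟨_, .inr ⟨p, rfl⟩, by rwa [ip_single]⟩

end Roots

section Coordinates

variable {n : ℕ} {a : ℕ → ℤ}

lemma wB_apply (k : ℕ) (t : ℤ) (p : Fin n) :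
    wB n k a t p = coordB n a p - if (p : ℕ) < k then (t : ℝ) else 0 :=
  rfl

lemma coordB_sub_coordB {p q : ℕ} (hpq : p ≤ q) (hq : q < n) :
    coordB n a p - coordB n a q = (∑ u ∈ Icc (p + 1) q, (a u : ℝ)) + ((q : ℝ) - p) := by
  have hsplit := sum_Ioc_consecutive (fun u => (a u : ℝ)) hpq (Nat.le_sub_one_of_lt hq)
  simp only [coordB, Icc_add_one_left_eq_Ioc] at hsplit ⊢
  linarith

lemma coordB_pos (ha : ∀ u, 1 ≤ u → u ≤ n → 0 ≤ a u) {p : ℕ} (hp : p < n) : 0 < coordB n a p := by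
  have hsum : 0 ≤ ∑ u ∈ Icc (p + 1) (n - 1), (a u : ℝ) :=
    sum_nonneg fun u hu => by have := mem_Icc.1 hu; exact_mod_cast ha u (by omega) (by omega)
  have han : (0 : ℝ) ≤ a n := by exact_mod_cast ha n (by omega) le_rfl
  have hpn : (p : ℝ) + 1 ≤ n := by exact_mod_cast hp
  rw [coordB]
  linarith

lemma coordB_lt_coordB (ha : ∀ u, 1 ≤ u → u ≤ n → 0 ≤ a u) {p q : ℕ} (hpq : p < q) (hq : q < n) : coordB n a q < coordB n a p := by
  have hsum : 0 ≤ ∑ u ∈ Icc (p + 1) q, (a u : ℝ) :=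
    sum_nonneg fun u hu => by have := mem_Icc.1 hu; exact_mod_cast ha u (by omega) (by omega)
  have hpq' : (p : ℝ) < q := by exact_mod_cast hpq
  linarith [coordB_sub_coordB (a := a) hpq.le hq]

end Coordinates

section Singular

variable {n k : ℕ} {a : ℕ → ℤ}

lemma isStepEntryB_of_exists_root (ha : ∀ u, 1 ≤ u → u ≤ n → 0 ≤ a u) {t : ℤ}
    (h : ∃ α ∈ PhiB n, ip n (wB n k a t) α = 0) : IsStepEntryB n k a t := by
  rw [exists_mem_PhiB_ip_eq_zero_iff] at h
  simp only [wB_apply] at h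
  rcases h with ⟨p, q, hpq, h⟩ | ⟨p, q, hpq, h⟩ | ⟨p, h⟩
  · have hp : (p : ℕ) < k := by
      by_contra hp
      have := coordB_pos ha p.isLt
      have := coordB_pos ha q.isLt
      rw [if_neg hp, if_neg (by omega)] at h
      linarith
    rw [if_pos hp] at h
    by_cases hq : (q : ℕ) < k
    · rw [if_pos hq] at h
      exact .inr <| .inr ⟨p, q, hpq.le, hq, by linarith⟩
    · rw [if_neg hq] at h
      exact .inr <| .inl ⟨p, q, hp, not_lt.1 hq, q.isLt, by linarith⟩
  · have hlt := coordB_lt_coordB ha hpq q.isLt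
    by_cases hq : (q : ℕ) < k
    · rw [if_pos hq, if_pos (Fin.lt_def.1 hpq |>.trans hq)] at h
      linarith
    by_cases hp : (p : ℕ) < k
    · rw [if_pos hp, if_neg hq] at h
      exact .inl ⟨p, q, hp, not_lt.1 hq, q.isLt, by linarith⟩
    · rw [if_neg hp, if_neg hq] at h
      linarith
  · by_cases hp : (p : ℕ) < k
    · rw [if_pos hp] at h
      exact .inr <| .inr ⟨p, p, le_rfl, hp, by linarith⟩
    · rw [if_neg hp] at h
      linarith [coordB_pos ha p.isLt]

lemma exists_root_of_isStepEntryB (hk : k ≤ n) {t : ℤ} (h : IsStepEntryB n k a t) :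
    ∃ α ∈ PhiB n, ip n (wB n k a t) α = 0 := by
  rw [exists_mem_PhiB_ip_eq_zero_iff]
  simp only [wB_apply]
  rcases h with ⟨p, q, hp, hkq, hq, h⟩ | ⟨p, q, hp, hkq, hq, h⟩ | ⟨p, q, hpq, hq, h⟩
  · refine .inr <| .inl ⟨⟨p, by omega⟩, ⟨q, hq⟩, Fin.mk_lt_mk.2 (by omega), ?_⟩
    simp only [if_pos hp, if_neg (not_lt.2 hkq)]
    linarith
  · refine .inl ⟨⟨p, by omega⟩, ⟨q, hq⟩, Fin.mk_lt_mk.2 (by omega), ?_⟩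
    simp only [if_pos hp, if_neg (not_lt.2 hkq)]
    linarith
  · rcases hpq.lt_or_eq with hpq | rfl
    · refine .inl ⟨⟨p, by omega⟩, ⟨q, by omega⟩, Fin.mk_lt_mk.2 hpq, ?_⟩
      simp only [if_pos (hpq.trans hq), if_pos hq]
      linarith
    · refine .inr <| .inr ⟨⟨p, by omega⟩, ?_⟩
      simp only [if_pos hq]
      linarith

end Singular

section StepMatrix

variable {n k : ℕ} {a : ℕ → ℤ} {p q : ℕ}

lemma cast_SB_entry_sub (hp : p < k) (hkq : k ≤ q) (hq : q < n) :
    (((∑ u ∈ Icc (k + 1 - (k - p)) (k + (q + 1 - k) - 1), (a u : ℚ))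
      + ((k - p : ℕ) : ℚ) + ((q + 1 - k : ℕ) : ℚ) - 1 : ℚ) : ℝ)
      = coordB n a p - coordB n a q := by
  rw [show k + 1 - (k - p) = p + 1 by omega, show k + (q + 1 - k) - 1 = q by omega,
    coordB_sub_coordB (by omega) hq]
  push_cast [Nat.cast_sub hp.le, Nat.cast_sub (by omega : k ≤ q + 1)]
  ring

lemma cast_SB_entry_add (hp : p < k) (hq : q < n) :
    (((∑ u ∈ Icc (k + 1 - (k - p)) (n - 1), (a u : ℚ))
      + (∑ u ∈ Icc (n + 1 - (n - q)) (n - 1), (a u : ℚ)) + (a n : ℚ)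
      + n - k + ((k - p : ℕ) : ℚ) + ((n - q : ℕ) : ℚ) - 1 : ℚ) : ℝ)
      = coordB n a p + coordB n a q := by
  rw [show k + 1 - (k - p) = p + 1 by omega, show n + 1 - (n - q) = q + 1 by omega]
  push_cast [coordB, Nat.cast_sub hp.le, Nat.cast_sub hq.le]
  ring

lemma two_mul_cast_SB_entry_half (hp : p < k) (hq : q < k) :
    2 * ((((∑ u ∈ Icc (k + 1 - (k - q)) (n - 1), (a u : ℚ))
      + (∑ u ∈ Icc (k + 1 - (k - p)) (n - 1), (a u : ℚ)) + (a n : ℚ)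
      + ((k - q : ℕ) : ℚ) + ((k - p : ℕ) : ℚ) + 2 * n - 2 * k - 1) / 2 : ℚ) : ℝ)
      = coordB n a p + coordB n a q := by
  rw [show k + 1 - (k - p) = p + 1 by omega, show k + 1 - (k - q) = q + 1 by omega]
  push_cast [coordB, Nat.cast_sub hp.le, Nat.cast_sub hq.le]
  ring

lemma mem_SB_iff (x : ℚ) : x ∈ SB n k a ↔ IsStepEntryB n k a x := by
  simp only [SB, Set.mem_union, Set.mem_ofPred_eq, IsStepEntryB, or_assoc]
  refine or_congr ⟨?_, ?_⟩ (or_congr ⟨?_, ?_⟩ ⟨?_, ?_⟩)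
  · rintro ⟨i, j, hi, hik, hj, hjk, rfl⟩
    obtain ⟨p, rfl⟩ : ∃ p, i = k - p := ⟨k - i, by omega⟩
    obtain ⟨q, rfl⟩ : ∃ q, j = q + 1 - k := ⟨k + j - 1, by omega⟩
    exact ⟨p, q, by omega, by omega, by omega, cast_SB_entry_sub (by omega) (by omega) (by omega)⟩
  · rintro ⟨p, q, hp, hkq, hq, hx⟩
    exact ⟨k - p, q + 1 - k, by omega, by omega, by omega, by omega,
      Rat.cast_injective (α := ℝ) (hx.trans (cast_SB_entry_sub hp hkq hq).symm)⟩
  · rintro ⟨i, j, hi, hik, hj, hjk, rfl⟩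
    obtain ⟨p, rfl⟩ : ∃ p, i = k - p := ⟨k - i, by omega⟩
    obtain ⟨q, rfl⟩ : ∃ q, j = n - q := ⟨n - j, by omega⟩
    exact ⟨p, q, by omega, by omega, by omega, cast_SB_entry_add (by omega) (by omega)⟩
  · rintro ⟨p, q, hp, hkq, hq, hx⟩
    exact ⟨k - p, n - q, by omega, by omega, by omega, by omega,
      Rat.cast_injective (α := ℝ) (hx.trans (cast_SB_entry_add hp hq).symm)⟩
  · rintro ⟨i, j, hi, hij, hjk, rfl⟩
    obtain ⟨q, rfl⟩ : ∃ q, i = k - q := ⟨k - i, by omega⟩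
    obtain ⟨p, rfl⟩ : ∃ p, j = k - p := ⟨k - j, by omega⟩
    exact ⟨p, q, by omega, by omega, two_mul_cast_SB_entry_half (by omega) (by omega)⟩
  · rintro ⟨p, q, hpq, hq, hx⟩
    refine ⟨k - q, k - p, by omega, by omega, by omega, Rat.cast_injective (α := ℝ) ?_⟩
    have := two_mul_cast_SB_entry_half (a := a) (n := n) (lt_of_le_of_lt hpq hq) hq
    linarith

end StepMatrix

theorem singular_criterion_B_lt_general (n k : ℕ) (hkn : k ≤ n - 1)
    (a : ℕ → ℤ) (ha : ∀ u, 1 ≤ u → u ≤ n → 0 ≤ a u) (t : ℤ) :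
    (∃ α ∈ PhiB n, ip n (wB n k a t) α = 0) ↔ (t : ℚ) ∈ SB n k a := by
  rw [mem_SB_iff, Rat.cast_intCast]
  exact ⟨isStepEntryB_of_exists_root ha, exists_root_of_isStepEntryB (by omega)⟩

/-- Singularity criterion of type `B`, `k < n`: `λ+ρ-tλ_k` is singular iff `t` is an
entry of the step matrix `T^B_{k,λ}`. -/
theorem singular_criterion_B_lt (n k : ℕ) (hn : 2 ≤ n) (hk1 : 1 ≤ k) (hkn : k ≤ n - 1)
    (a : ℕ → ℤ) (ha : ∀ u, 1 ≤ u → u ≤ n → 0 ≤ a u) (t : ℤ) :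
    (∃ α ∈ PhiB n, ip n (wB n k a t) α = 0) ↔ (t : ℚ) ∈ SB n k a :=
  singular_criterion_B_lt_general n k hkn a ha t
end

section
/- (Singularity criterion of type C, k < n; the key step of the main theorem for C_n/P(α_k).) Let n ≥ 2 and 1 ≤ k ≤ n−1, and let a_1,…,a_n be nonnegative integers. Then for every integer t, there exists a positive root α ∈ Φ⁺_C with ⟨w(t), α⟩ = 0 if and only if t belongs to the step-matrix entry set S^C_{k,a}. -/
open Finset

/-- The positive roots of type `Cₙ`: `eₚ+e_q` (`p≤q`) and `eₚ-e_q` (`p<q`). -/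
def PhiC (n : ℕ) : Set (Fin n → ℝ) :=
  {α | ∃ p q : Fin n, p ≤ q ∧
      α = fun i => (if i = p then (1:ℝ) else 0) + (if i = q then 1 else 0)} ∪
  {α | ∃ p q : Fin n, p < q ∧
      α = fun i => (if i = p then (1:ℝ) else 0) - (if i = q then 1 else 0)}

/-- The coordinate form of the weight `λ+ρ-tλ_k` for type `Cₙ`, `k < n`
(coordinates are indexed one-based). -/
noncomputable def wC (n k : ℕ) (a : ℕ → ℤ) (t : ℤ) : Fin n → ℝ := fun i =>
  (∑ u ∈ Icc (i.val + 1) (n - 1), (a u : ℝ)) + (a n : ℝ) + 1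
    + ((n : ℝ) - (i.val + 1)) - (if i.val + 1 ≤ k then (t : ℝ) else 0)

/-- The step-matrix entry set `S^C_{k,a}`. -/
def SC (n k : ℕ) (a : ℕ → ℤ) : Set ℚ :=
  {x | ∃ i j : ℕ, 1 ≤ i ∧ i ≤ k ∧ 1 ≤ j ∧ j ≤ n - k ∧
    x = (∑ u ∈ Icc (k + 1 - i) (k + j - 1), (a u : ℚ)) + i + j - 1} ∪
  {x | ∃ i j : ℕ, 1 ≤ i ∧ i ≤ k ∧ 1 ≤ j ∧ j ≤ n - k ∧
    x = (∑ u ∈ Icc (k + 1 - i) (n - 1), (a u : ℚ))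
      + (∑ u ∈ Icc (n + 1 - j) (n - 1), (a u : ℚ)) + 2 * (a n : ℚ)
      + n - k + i + j} ∪
  {x | ∃ i j : ℕ, 1 ≤ i ∧ i ≤ j ∧ j ≤ k ∧
    x = ((∑ u ∈ Icc (k + 1 - i) (n - 1), (a u : ℚ))
      + (∑ u ∈ Icc (k + 1 - j) (n - 1), (a u : ℚ)) + 2 * (a n : ℚ)
      + i + j + 2 * n - 2 * k) / 2}

/-! In coordinates `λ + ρ` is a positive, strictly decreasing vector `r`, and `λ + ρ - tλ_k`
subtracts `t` from its first `k` coordinates. A root `eₚ - e_q` can then only be orthogonal to it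
across the block, when `t = r_p - r_q`; a root `eₚ + e_q` needs an index inside the block, giving
`t = r_p + r_q` across it or `2t = r_p + r_q` inside it. Substitutions such as `p = k + 1 - i`,
`q = n + 1 - j` turn these three families into the three forms of `S^C_{k,a}`. -/

/-- Zero-based coordinates of `λ + ρ`, so that `wC n k a t i = lamRhoC n a i - t` for `i < k`. -/
def lamRhoC (n : ℕ) (a : ℕ → ℤ) (i : Fin n) : ℚ :=
  ∑ u ∈ Ico (i.val + 1) n, (a u : ℚ) + a n + (n - i.val)

def IsSingularC {ι K : Type*} [Preorder ι] [Add K] [Zero K] (v : ι → K) : Prop :=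
  ∃ p q, p ≤ q ∧ v p + v q = 0 ∨ p < q ∧ v p = v q

theorem ip_sum_root {n : ℕ} (v : Fin n → ℝ) (p q : Fin n) :
    ip n v (fun i => (if i = p then (1:ℝ) else 0) + (if i = q then 1 else 0)) = v p + v q := by
  simp [ip, mul_add, sum_add_distrib]

theorem ip_diff_root {n : ℕ} (v : Fin n → ℝ) (p q : Fin n) :
    ip n v (fun i => (if i = p then (1:ℝ) else 0) - (if i = q then 1 else 0)) = v p - v q := by
  simp [ip, mul_sub, sum_sub_distrib]

theorem exists_mem_PhiC_ip_eq_zero_iff {n : ℕ} (v : Fin n → ℝ) :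
    (∃ α ∈ PhiC n, ip n v α = 0) ↔ IsSingularC v := by
  constructor
  · rintro ⟨α, ⟨p, q, hpq, rfl⟩ | ⟨p, q, hpq, rfl⟩, h⟩
    · exact ⟨p, q, .inl ⟨hpq, by rwa [ip_sum_root] at h⟩⟩
    · exact ⟨p, q, .inr ⟨hpq, by rw [ip_diff_root] at h; linarith⟩⟩
  · rintro ⟨p, q, ⟨hpq, h⟩ | ⟨hpq, h⟩⟩
    · exact ⟨_, .inl ⟨p, q, hpq, rfl⟩, by rwa [ip_sum_root]⟩
    · exact ⟨_, .inr ⟨p, q, hpq, rfl⟩, by rw [ip_diff_root, h, sub_self]⟩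

theorem isSingularC_ratCast_iff {ι K : Type*} [Preorder ι] [DivisionRing K] [CharZero K]
    (v : ι → ℚ) : IsSingularC (fun i => (v i : K)) ↔ IsSingularC v := by
  simp only [IsSingularC, ← Rat.cast_add, Rat.cast_eq_zero, Rat.cast_inj]

theorem isSingularC_sub_ite_iff {ι K : Type*} [LinearOrder ι] [Field K] [LinearOrder K]
    [IsStrictOrderedRing K] {r : ι → K} (hr : StrictAnti r) (hpos : ∀ i, 0 < r i)
    {B : Set ι} (hB : IsLowerSet B) [DecidablePred (· ∈ B)] (t : K) :
    IsSingularC (fun i => r i - if i ∈ B then t else 0) ↔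
      ((∃ p q, p ∈ B ∧ q ∉ B ∧ t = r p - r q) ∨ (∃ p q, p ∈ B ∧ q ∉ B ∧ t = r p + r q)) ∨
        ∃ p q, p ≤ q ∧ q ∈ B ∧ t = (r p + r q) / 2 := by
  have lt_of_mem_not_mem {p q : ι} (hp : p ∈ B) (hq : q ∉ B) : p < q :=
    lt_of_not_ge fun hqp => hq (hB hqp hp)
  constructor
  · rintro ⟨p, q, ⟨hpq, h⟩ | ⟨hpq, h⟩⟩
    · by_cases hq : q ∈ B
      · simp only [hq, hB hpq hq, if_true] at h
        exact .inr ⟨p, q, hpq, hq, by linarith⟩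
      by_cases hp : p ∈ B
      · simp only [hp, hq, if_true, if_false] at h
        exact .inl (.inr ⟨p, q, hp, hq, by linarith⟩)
      · simp only [hp, hq, if_false] at h
        linarith [hpos p, hpos q]
    · have hrpq := hr hpq
      by_cases hp : p ∈ B
      · by_cases hq : q ∈ B
        · simp only [hp, hq, if_true] at h
          linarith
        · simp only [hp, hq, if_true, if_false] at h
          exact .inl (.inl ⟨p, q, hp, hq, by linarith⟩)
      · have hq : q ∉ B := fun hq => hp (hB hpq.le hq)
        simp only [hp, hq, if_false] at h
        linarith
  · rintro ((⟨p, q, hp, hq, h⟩ | ⟨p, q, hp, hq, h⟩) | ⟨p, q, hpq, hq, h⟩)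
    · refine ⟨p, q, .inr ⟨lt_of_mem_not_mem hp hq, ?_⟩⟩
      simp only [hp, hq, if_true, if_false]
      linarith
    · refine ⟨p, q, .inl ⟨(lt_of_mem_not_mem hp hq).le, ?_⟩⟩
      simp only [hp, hq, if_true, if_false]
      linarith
    · refine ⟨p, q, .inl ⟨hpq, ?_⟩⟩
      simp only [hB hpq hq, hq, if_true]
      linarith

section lamRhoC

variable {n : ℕ} {a : ℕ → ℤ}

theorem lamRhoC_sub_lamRhoC {p q : Fin n} (hpq : p ≤ q) :
    lamRhoC n a p - lamRhoC n a q = ∑ u ∈ Ico (p.val + 1) (q.val + 1), (a u : ℚ) + (q - p) := by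
  rw [lamRhoC, lamRhoC, ← sum_Ico_consecutive _ (Nat.succ_le_succ hpq) q.isLt]
  ring

theorem lamRhoC_add_lamRhoC (p q : Fin n) :
    lamRhoC n a p + lamRhoC n a q = ∑ u ∈ Ico (p.val + 1) n, (a u : ℚ)
      + ∑ u ∈ Ico (q.val + 1) n, (a u : ℚ) + 2 * a n + 2 * n - p - q := by
  rw [lamRhoC, lamRhoC]
  ring

theorem sum_Ico_nonneg (ha : ∀ u, 1 ≤ u → u ≤ n → 0 ≤ a u) {m m' : ℕ} (hm : 1 ≤ m)
    (hm' : m' ≤ n + 1) : 0 ≤ ∑ u ∈ Ico m m', (a u : ℚ) :=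
  sum_nonneg fun u hu => by
    have := mem_Ico.1 hu
    exact_mod_cast ha u (by omega) (by omega)

theorem lamRhoC_strictAnti (ha : ∀ u, 1 ≤ u → u ≤ n → 0 ≤ a u) :
    StrictAnti (lamRhoC n a) := by
  intro p q hpq
  have hsum := sum_Ico_nonneg ha (Nat.le_add_left 1 p.val) (Nat.succ_le_succ q.isLt.le)
  have hpq' : (p.val : ℚ) < q.val := by exact_mod_cast hpq
  linarith [lamRhoC_sub_lamRhoC (a := a) hpq.le]

theorem lamRhoC_pos (ha : ∀ u, 1 ≤ u → u ≤ n → 0 ≤ a u) (i : Fin n) :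
    0 < lamRhoC n a i := by
  have hsum := sum_Ico_nonneg ha (Nat.le_add_left 1 i.val) (Nat.le_succ n)
  have han : (0 : ℚ) ≤ a n := by exact_mod_cast ha n (by have := i.isLt; omega) le_rfl
  have hi : (i.val : ℚ) < n := by exact_mod_cast i.isLt
  unfold lamRhoC
  linarith

end lamRhoC

theorem wC_eq_ratCast (n k : ℕ) (a : ℕ → ℤ) (t : ℤ) :
    wC n k a t = fun i => ((lamRhoC n a i - if i.val < k then (t : ℚ) else 0 : ℚ) : ℝ) := by
  funext i
  obtain ⟨m, rfl⟩ : ∃ m, n = m + 1 := Nat.exists_eq_add_one.2 i.pos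
  simp only [wC, lamRhoC, Nat.add_sub_cancel, ← Ico_add_one_right_eq_Icc, Nat.add_one_le_iff]
  split <;> push_cast <;> ring

section StepMatrix

variable {n k : ℕ} {a : ℕ → ℤ}

theorem SC_diff_family_iff (x : ℚ) :
    (∃ i j : ℕ, 1 ≤ i ∧ i ≤ k ∧ 1 ≤ j ∧ j ≤ n - k ∧
      x = (∑ u ∈ Icc (k + 1 - i) (k + j - 1), (a u : ℚ)) + i + j - 1) ↔
    ∃ p q : Fin n, p.val < k ∧ k ≤ q.val ∧ x = lamRhoC n a p - lamRhoC n a q := by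
  constructor
  · rintro ⟨i, j, hi, hik, hj, hjk, rfl⟩
    refine ⟨⟨k - i, by omega⟩, ⟨k + j - 1, by omega⟩, by simp; omega, by simp; omega, ?_⟩
    rw [lamRhoC_sub_lamRhoC (Fin.le_def.2 (by simp; omega))]
    simp only [show k - i + 1 = k + 1 - i by omega, Ico_add_one_right_eq_Icc]
    push_cast [Nat.cast_sub hik, Nat.cast_sub (by omega : 1 ≤ k + j)]
    ring
  · rintro ⟨p, q, hp, hq, rfl⟩
    refine ⟨k - p, q + 1 - k, by omega, by omega, by omega, by omega, ?_⟩
    rw [lamRhoC_sub_lamRhoC (Fin.le_def.2 (by omega)), show k + 1 - (k - p) = p + 1 by omega,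
      show k + (q + 1 - k) - 1 = q by omega, ← Ico_add_one_right_eq_Icc]
    push_cast [Nat.cast_sub hp.le, Nat.cast_sub (by omega : k ≤ q + 1)]
    ring

theorem SC_sum_family_iff (x : ℚ) :
    (∃ i j : ℕ, 1 ≤ i ∧ i ≤ k ∧ 1 ≤ j ∧ j ≤ n - k ∧
      x = (∑ u ∈ Icc (k + 1 - i) (n - 1), (a u : ℚ))
        + (∑ u ∈ Icc (n + 1 - j) (n - 1), (a u : ℚ)) + 2 * (a n : ℚ) + n - k + i + j) ↔
    ∃ p q : Fin n, p.val < k ∧ k ≤ q.val ∧ x = lamRhoC n a p + lamRhoC n a q := by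
  constructor
  · rintro ⟨i, j, hi, hik, hj, hjk, rfl⟩
    refine ⟨⟨k - i, by omega⟩, ⟨n - j, by omega⟩, by simp; omega, by simp; omega, ?_⟩
    rw [lamRhoC_add_lamRhoC]
    simp only [Icc_sub_one_right_eq_Ico_of_not_isMin (by simp; omega : ¬IsMin n),
      show k - i + 1 = k + 1 - i by omega, show n - j + 1 = n + 1 - j by omega]
    push_cast [Nat.cast_sub hik, Nat.cast_sub (by omega : j ≤ n)]
    ring
  · rintro ⟨p, q, hp, hq, rfl⟩
    refine ⟨k - p, n - q, by omega, by omega, by omega, by omega, ?_⟩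
    rw [lamRhoC_add_lamRhoC]
    simp only [Icc_sub_one_right_eq_Ico_of_not_isMin (by simp; omega : ¬IsMin n),
      show k + 1 - (k - p) = p + 1 by omega, show n + 1 - (n - q) = q + 1 by omega]
    push_cast [Nat.cast_sub hp.le, Nat.cast_sub q.isLt.le]
    ring

theorem SC_mean_family_iff (hk : k ≤ n) (x : ℚ) :
    (∃ i j : ℕ, 1 ≤ i ∧ i ≤ j ∧ j ≤ k ∧
      x = ((∑ u ∈ Icc (k + 1 - i) (n - 1), (a u : ℚ))
        + (∑ u ∈ Icc (k + 1 - j) (n - 1), (a u : ℚ)) + 2 * (a n : ℚ)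
        + i + j + 2 * n - 2 * k) / 2) ↔
    ∃ p q : Fin n, p ≤ q ∧ q.val < k ∧ x = (lamRhoC n a p + lamRhoC n a q) / 2 := by
  constructor
  · rintro ⟨i, j, hi, hij, hjk, rfl⟩
    refine ⟨⟨k - j, by omega⟩, ⟨k - i, by omega⟩, Fin.le_def.2 (by simp; omega), by simp; omega,
      ?_⟩
    rw [lamRhoC_add_lamRhoC]
    simp only [Icc_sub_one_right_eq_Ico_of_not_isMin (by simp; omega : ¬IsMin n),
      show k - i + 1 = k + 1 - i by omega, show k - j + 1 = k + 1 - j by omega]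
    push_cast [Nat.cast_sub hjk, Nat.cast_sub (hij.trans hjk)]
    ring
  · rintro ⟨p, q, hpq, hq, rfl⟩
    refine ⟨k - q, k - p, by omega, by omega, by omega, ?_⟩
    rw [lamRhoC_add_lamRhoC]
    simp only [Icc_sub_one_right_eq_Ico_of_not_isMin (by simp; omega : ¬IsMin n),
      show k + 1 - (k - q) = q + 1 by omega, show k + 1 - (k - p) = p + 1 by omega]
    push_cast [Nat.cast_sub hq.le, Nat.cast_sub (by omega : p.val ≤ k)]
    ring

theorem mem_SC_iff (hk : k ≤ n) (x : ℚ) :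
    x ∈ SC n k a ↔
      ((∃ p q : Fin n, p.val < k ∧ k ≤ q.val ∧ x = lamRhoC n a p - lamRhoC n a q) ∨
        ∃ p q : Fin n, p.val < k ∧ k ≤ q.val ∧ x = lamRhoC n a p + lamRhoC n a q) ∨
      ∃ p q : Fin n, p ≤ q ∧ q.val < k ∧ x = (lamRhoC n a p + lamRhoC n a q) / 2 :=
  or_congr (or_congr (SC_diff_family_iff x) (SC_sum_family_iff x)) (SC_mean_family_iff hk x)

end StepMatrix

theorem singular_criterion_C_lt_general (n k : ℕ) (hkn : k ≤ n - 1)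
    (a : ℕ → ℤ) (ha : ∀ u, 1 ≤ u → u ≤ n → 0 ≤ a u) (t : ℤ) :
    (∃ α ∈ PhiC n, ip n (wC n k a t) α = 0) ↔ (t : ℚ) ∈ SC n k a := by
  have hB : IsLowerSet {i : Fin n | i.val < k} := fun _ _ hji hj => lt_of_le_of_lt (α := ℕ) hji hj
  have hshift := isSingularC_sub_ite_iff (lamRhoC_strictAnti ha) (lamRhoC_pos ha) hB (t : ℚ)
  simp only [Set.mem_ofPred_eq, not_lt] at hshift
  rw [exists_mem_PhiC_ip_eq_zero_iff, wC_eq_ratCast, isSingularC_ratCast_iff, hshift,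
    mem_SC_iff (by omega)]

/-- Singularity criterion of type `C`, `k < n`: `λ+ρ-tλ_k` is singular iff `t` is an
entry of the step matrix `T^C_{k,λ}`. -/
theorem singular_criterion_C_lt (n k : ℕ) (hn : 2 ≤ n) (hk1 : 1 ≤ k) (hkn : k ≤ n - 1)
    (a : ℕ → ℤ) (ha : ∀ u, 1 ≤ u → u ≤ n → 0 ≤ a u) (t : ℤ) :
    (∃ α ∈ PhiC n, ip n (wC n k a t) α = 0) ↔ (t : ℚ) ∈ SC n k a :=
  singular_criterion_C_lt_general n k hkn a ha t
end

section
/- (Top-index criterion of type B, k < n.) Let n ≥ 2 and 1 ≤ k ≤ n−1, and let a_1,…,a_n be nonnegative integers. Then for every integer t, the number of positive roots α ∈ Φ⁺_B with ⟨w(t), α⟩ < 0 equals k(4n+1−3k)/2 (the dimension of the isotropic Grassmannian B_n/P(α_k)) if and only if t > M^B_{k,a}. -/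
open Finset

/-- `M^B_{k,a}`, the largest entry of the step matrix. -/
def MB (n k : ℕ) (a : ℕ → ℤ) : ℤ :=
  (∑ u ∈ Icc 1 (n - 1), a u) + (∑ u ∈ Icc (k + 1) (n - 1), a u) + a n
    + 2 * (n : ℤ) - (k : ℤ) - 1

/-!
Write `w(t) = b - t • λ_k` with `b = w(0)` (the weight `λ + ρ`) and `λ_k = e₁ + ⋯ + e_k`. Both
`b` and `λ_k` have weakly decreasing nonnegative coordinates, so they pair nonnegatively with every
positive root. Hence a root `α` with `⟨λ_k, α⟩ = 0` has `⟨w(t), α⟩ = ⟨b, α⟩ ≥ 0`: the negative roots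
lie among the `k(4n+1-3k)/2` positive roots with `⟨λ_k, α⟩ > 0`. On those, `⟨b, α⟩ / ⟨λ_k, α⟩` is
largest at `α = e₁ + e_{k+1}`, where it equals `b₁ + b_{k+1} = M^B_{k,a}`; so all of them are
negative exactly when `t > M^B_{k,a}`.
-/

lemma card_filter_prod {α β : Type*} [Fintype α] [Fintype β] (R : α → β → Prop)
    [∀ a, DecidablePred (R a)] : #{x : α × β | R x.1 x.2} = ∑ a, #{b | R a b} := by
  simp only [card_filter, Fintype.sum_prod_type]

lemma sum_range_sub_mul_two {c k : ℕ} (h : k ≤ c) :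
    (∑ j ∈ range k, (c - j)) * 2 = k * (2 * c + 1 - k) := by
  induction k with
  | zero => simp
  | succ k ih =>
    obtain ⟨d, rfl⟩ := Nat.exists_eq_add_of_le h
    rw [sum_range_succ, add_mul, ih (by omega),
      show 2 * (k + 1 + d) + 1 - k = k + 2 * d + 3 by omega,
      show k + 1 + d - k = d + 1 by omega,
      show 2 * (k + 1 + d) + 1 - (k + 1) = k + 2 * d + 2 by omega]
    ring

lemma sum_fin_ite_val_lt {M : Type*} [AddCommMonoid M] {n k : ℕ} (hk : k ≤ n) (f : ℕ → M) :
    ∑ i : Fin n, (if (i : ℕ) < k then f i else 0) = ∑ j ∈ range k, f j := by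
  rw [Fin.sum_univ_eq_sum_range (fun j => if j < k then f j else 0), ← sum_filter]
  congr 1
  ext j
  simp only [mem_filter, mem_range]
  omega

section

variable {n k : ℕ}

lemma ip_eq_dotProduct (v w : Fin n → ℝ) : ip n v w = v ⬝ᵥ w := rfl

def rootPlus (p q : Fin n) : Fin n → ℝ := Pi.single p 1 + Pi.single q 1

def rootMinus (p q : Fin n) : Fin n → ℝ := Pi.single p 1 - Pi.single q 1

lemma mem_PhiB {α : Fin n → ℝ} :
    α ∈ PhiB n ↔ (∃ p q, p < q ∧ α = rootPlus p q) ∨ (∃ p q, p < q ∧ α = rootMinus p q) ∨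
      ∃ p, α = Pi.single p 1 := by
  have single_eq (p : Fin n) : (fun i => if i = p then (1 : ℝ) else 0) = Pi.single p 1 :=
    funext fun i => (Pi.single_apply p 1 i).symm
  have plus_eq (p q : Fin n) : (fun i => (if i = p then (1 : ℝ) else 0) + if i = q then 1 else 0)
      = rootPlus p q := by rw [rootPlus, ← single_eq, ← single_eq]; rfl
  have minus_eq (p q : Fin n) : (fun i => (if i = p then (1 : ℝ) else 0) - if i = q then 1 else 0)
      = rootMinus p q := by rw [rootMinus, ← single_eq, ← single_eq]; rfl
  simp only [PhiB, Set.mem_union, Set.mem_ofPred_eq, plus_eq, minus_eq, single_eq, or_assoc]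

lemma finite_PhiB : (PhiB n).Finite := by
  refine ((Set.finite_range fun pq : Fin n × Fin n => rootPlus pq.1 pq.2).union
    ((Set.finite_range fun pq : Fin n × Fin n => rootMinus pq.1 pq.2).union
      (Set.finite_range (Pi.single · 1)))).subset fun α hα => ?_
  rcases mem_PhiB.1 hα with ⟨p, q, -, rfl⟩ | ⟨p, q, -, rfl⟩ | ⟨p, rfl⟩
  · exact Or.inl ⟨(p, q), rfl⟩
  · exact Or.inr (Or.inl ⟨(p, q), rfl⟩)
  · exact Or.inr (Or.inr ⟨p, rfl⟩)

@[simp] lemma dotProduct_rootPlus (v : Fin n → ℝ) (p q : Fin n) :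
    v ⬝ᵥ rootPlus p q = v p + v q := by
  simp [rootPlus, dotProduct_add, dotProduct_single]

@[simp] lemma dotProduct_rootMinus (v : Fin n → ℝ) (p q : Fin n) :
    v ⬝ᵥ rootMinus p q = v p - v q := by
  simp [rootMinus, dotProduct_sub, dotProduct_single]

lemma eq_of_rootPlus_eq {p q p' q' : Fin n} (h : p < q) (h' : p' < q')
    (he : rootPlus p q = rootPlus p' q') : p = p' ∧ q = q' := by
  have e₁ := congrFun he p
  have e₂ := congrFun he q
  simp [rootPlus, Pi.single_apply, h.ne, h.ne'] at e₁ e₂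
  grind

lemma eq_of_rootMinus_eq {p q p' q' : Fin n} (h : p < q) (he : rootMinus p q = rootMinus p' q') :
    p = p' ∧ q = q' := by
  have e₁ := congrFun he p
  have e₂ := congrFun he q
  simp [rootMinus, Pi.single_apply, h.ne, h.ne'] at e₁ e₂
  grind

lemma ncard_setOf_mem_PhiB (P : (Fin n → ℝ) → Prop) [DecidablePred P] :
    {α ∈ PhiB n | P α}.ncard =
      #{pq : Fin n × Fin n | pq.1 < pq.2 ∧ P (rootPlus pq.1 pq.2)} +
      #{pq : Fin n × Fin n | pq.1 < pq.2 ∧ P (rootMinus pq.1 pq.2)} +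
      #{p : Fin n | P (Pi.single p 1)} := by
  set plus := fun pq : Fin n × Fin n => rootPlus pq.1 pq.2
  set minus := fun pq : Fin n × Fin n => rootMinus pq.1 pq.2
  set S₁ : Finset (Fin n × Fin n) := {pq | pq.1 < pq.2 ∧ P (plus pq)}
  set S₂ : Finset (Fin n × Fin n) := {pq | pq.1 < pq.2 ∧ P (minus pq)}
  set S₃ : Finset (Fin n) := {p | P (Pi.single p 1)}
  have hset : {α ∈ PhiB n | P α} =
      ↑((S₁.image plus ∪ S₂.image minus) ∪ S₃.image (Pi.single · 1)) := by
    ext α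
    simp only [Set.mem_ofPred_eq, mem_PhiB, coe_union, coe_image]
    aesop
  -- the coordinate sums `2`, `0`, `1` tell the three kinds of roots apart
  have hne {α β : Fin n → ℝ} (h : 1 ⬝ᵥ α ≠ 1 ⬝ᵥ β) : α ≠ β := fun he => h (he ▸ rfl)
  have hd₁₂ : Disjoint (S₁.image plus) (S₂.image minus) := by
    simp only [Finset.disjoint_iff_ne, mem_image]
    rintro _ ⟨pq, -, rfl⟩ _ ⟨pq', -, rfl⟩
    exact hne (by norm_num [plus, minus])
  have hd₃ : Disjoint (S₁.image plus ∪ S₂.image minus) (S₃.image (Pi.single · 1)) := by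
    simp only [Finset.disjoint_iff_ne, mem_union, mem_image]
    rintro _ (⟨pq, -, rfl⟩ | ⟨pq, -, rfl⟩) _ ⟨p, -, rfl⟩ <;> exact hne (by norm_num [plus, minus])
  have hlt₁ (pq) (h : pq ∈ S₁) : pq.1 < pq.2 := (mem_filter.1 h).2.1
  have hlt₂ (pq) (h : pq ∈ S₂) : pq.1 < pq.2 := (mem_filter.1 h).2.1
  have hinj₁ : Set.InjOn plus S₁ := fun x hx y hy he =>
    Prod.ext_iff.2 (eq_of_rootPlus_eq (hlt₁ x hx) (hlt₁ y hy) he)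
  have hinj₂ : Set.InjOn minus S₂ := fun x hx _ _ he =>
    Prod.ext_iff.2 (eq_of_rootMinus_eq (hlt₂ x hx) he)
  have hinj₃ : Function.Injective (Pi.single · 1 : Fin n → Fin n → ℝ) := fun p q he => by
    simpa [Pi.single_apply, eq_comm] using congrFun he p
  rw [hset, Set.ncard_coe_finset, card_union_of_disjoint hd₃, card_union_of_disjoint hd₁₂,
    card_image_of_injOn hinj₁, card_image_of_injOn hinj₂, card_image_of_injective _ hinj₃]

lemma dotProduct_nonneg_of_mem_PhiB {v α : Fin n → ℝ} (hv : Antitone v) (hv0 : ∀ i, 0 ≤ v i)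
    (hα : α ∈ PhiB n) : 0 ≤ v ⬝ᵥ α := by
  rcases mem_PhiB.1 hα with ⟨p, q, hpq, rfl⟩ | ⟨p, q, hpq, rfl⟩ | ⟨p, rfl⟩
  · simpa using add_nonneg (hv0 p) (hv0 q)
  · simpa using hv hpq.le
  · simpa using hv0 p

/-- `λ_k = e₁ + ⋯ + e_k`, in the coordinates of `PhiB`. -/
def fundWeight (k : ℕ) : Fin n → ℝ := fun i => if (i : ℕ) < k then 1 else 0

lemma fundWeight_of_lt {i : Fin n} (h : (i : ℕ) < k) : fundWeight k i = 1 := if_pos h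

lemma fundWeight_of_le {i : Fin n} (h : k ≤ (i : ℕ)) : fundWeight k i = 0 := if_neg h.not_gt

lemma fundWeight_antitone : Antitone (fundWeight (n := n) k) := by
  intro i j hij
  unfold fundWeight
  split_ifs <;> norm_num
  have := Fin.le_def.1 hij
  omega

lemma fundWeight_nonneg (i : Fin n) : 0 ≤ fundWeight k i := by
  unfold fundWeight; split_ifs <;> norm_num

lemma fundWeight_pos_iff {i : Fin n} : 0 < fundWeight k i ↔ (i : ℕ) < k := by
  unfold fundWeight; split_ifs <;> simp_all

lemma fundWeight_add_pos_iff {p q : Fin n} (h : p < q) :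
    0 < fundWeight k p + fundWeight k q ↔ (p : ℕ) < k := by
  have := Fin.lt_def.1 h
  unfold fundWeight; split_ifs <;> norm_num <;> omega

lemma fundWeight_sub_pos_iff {p q : Fin n} :
    0 < fundWeight k p - fundWeight k q ↔ (p : ℕ) < k ∧ k ≤ q := by
  unfold fundWeight; split_ifs <;> norm_num <;> omega

lemma card_filter_fundWeight_add_pos (p : Fin n) :
    #{q | p < q ∧ 0 < fundWeight k p + fundWeight k q} = if (p : ℕ) < k then n - 1 - p else 0 := by
  split_ifs with hp
  · rw [← Fin.card_Ioi]
    congr 1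
    ext q
    simp only [mem_filter, mem_univ, true_and, mem_Ioi]
    exact ⟨And.left, fun h => ⟨h, (fundWeight_add_pos_iff h).2 hp⟩⟩
  · exact card_eq_zero.2 (filter_false_of_mem fun q _ h => hp ((fundWeight_add_pos_iff h.1).1 h.2))

lemma card_filter_fundWeight_sub_pos (hk : k ≤ n) (p : Fin n) :
    #{q | p < q ∧ 0 < fundWeight k p - fundWeight k q} = if (p : ℕ) < k then n - k else 0 := by
  split_ifs with hp
  · have e : ({q | p < q ∧ 0 < fundWeight k p - fundWeight k q} : Finset (Fin n)) =
        ({q | ¬ (q : ℕ) < k} : Finset (Fin n)) := by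
      ext q
      simp only [mem_filter, mem_univ, true_and, fundWeight_sub_pos_iff, Fin.lt_def]
      omega
    rw [e, filter_not, card_univ_sdiff, Fin.card_filter_val_lt, Fintype.card_fin, min_eq_right hk]
  · exact card_eq_zero.2 (filter_false_of_mem fun q _ h => hp (fundWeight_sub_pos_iff.1 h.2).1)

lemma ncard_setOf_mem_PhiB_fundWeight_pos (hk : k ≤ n) :
    {α ∈ PhiB n | 0 < fundWeight k ⬝ᵥ α}.ncard = k * (4 * n + 1 - 3 * k) / 2 := by
  rw [ncard_setOf_mem_PhiB]
  simp only [dotProduct_rootPlus, dotProduct_rootMinus, dotProduct_single, mul_one]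
  rw [card_filter_prod (fun p q => p < q ∧ 0 < fundWeight k p + fundWeight k q),
    card_filter_prod (fun p q => p < q ∧ 0 < fundWeight k p - fundWeight k q), card_filter,
    ← sum_add_distrib, ← sum_add_distrib]
  have hfiber (p : Fin n) :
      #{q | p < q ∧ 0 < fundWeight k p + fundWeight k q} +
        #{q | p < q ∧ 0 < fundWeight k p - fundWeight k q} +
        (if 0 < fundWeight k p then 1 else 0) = if (p : ℕ) < k then 2 * n - k - p else 0 := by
    rw [card_filter_fundWeight_add_pos, card_filter_fundWeight_sub_pos hk]
    simp only [fundWeight_pos_iff]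
    split_ifs <;> omega
  rw [sum_congr rfl fun p _ => hfiber p, sum_fin_ite_val_lt hk]
  refine (Nat.div_eq_of_eq_mul_left two_pos ?_).symm
  rw [sum_range_sub_mul_two (by omega)]
  congr 1
  omega

lemma dotProduct_le_of_fundWeight_pos {b α : Fin n → ℝ} (hb : Antitone b) (hb0 : ∀ i, 0 ≤ b i)
    (hk : k < n) (hα : α ∈ PhiB n) (hu : 0 < fundWeight k ⬝ᵥ α) :
    b ⬝ᵥ α ≤ (b ⟨0, by omega⟩ + b ⟨k, hk⟩) * (fundWeight k ⬝ᵥ α) := by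
  have hle₀ (i : Fin n) : b i ≤ b ⟨0, by omega⟩ := hb (Nat.zero_le _)
  have hleₖ (i : Fin n) (hi : k ≤ (i : ℕ)) : b i ≤ b ⟨k, hk⟩ := hb hi
  have hbk := hb0 ⟨k, hk⟩
  rcases mem_PhiB.1 hα with ⟨p, q, hpq, rfl⟩ | ⟨p, q, hpq, rfl⟩ | ⟨p, rfl⟩
  · simp only [dotProduct_rootPlus] at hu ⊢
    have hp := (fundWeight_add_pos_iff hpq).1 hu
    by_cases hq : (q : ℕ) < k
    · rw [fundWeight_of_lt hp, fundWeight_of_lt hq]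
      linarith [hle₀ p, hle₀ q]
    · rw [fundWeight_of_lt hp, fundWeight_of_le (not_lt.1 hq)]
      linarith [hle₀ p, hleₖ q (not_lt.1 hq)]
  · simp only [dotProduct_rootMinus] at hu ⊢
    obtain ⟨hp, hq⟩ := fundWeight_sub_pos_iff.1 hu
    rw [fundWeight_of_lt hp, fundWeight_of_le hq]
    linarith [hle₀ p, hb0 q]
  · simp only [dotProduct_single, mul_one] at hu ⊢
    rw [fundWeight_of_lt (fundWeight_pos_iff.1 hu)]
    linarith [hle₀ p]

theorem ncard_setOf_mem_PhiB_neg_eq_iff {b : Fin n → ℝ} (hb : Antitone b) (hb0 : ∀ i, 0 ≤ b i)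
    (hk₀ : 0 < k) (hk : k < n) (t : ℝ) :
    {α ∈ PhiB n | (b - t • fundWeight k) ⬝ᵥ α < 0}.ncard = k * (4 * n + 1 - 3 * k) / 2 ↔
      b ⟨0, by omega⟩ + b ⟨k, hk⟩ < t := by
  set T := {α ∈ PhiB n | 0 < fundWeight k ⬝ᵥ α}
  have hsub : {α ∈ PhiB n | (b - t • fundWeight k) ⬝ᵥ α < 0} ⊆ T := by
    rintro α ⟨hα, hneg⟩
    refine ⟨hα, (dotProduct_nonneg_of_mem_PhiB fundWeight_antitone fundWeight_nonneg hα).lt_of_ne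
      fun h => ?_⟩
    rw [sub_dotProduct, smul_dotProduct, ← h, smul_zero, sub_zero] at hneg
    exact hneg.not_ge (dotProduct_nonneg_of_mem_PhiB hb hb0 hα)
  have hroot : rootPlus ⟨0, by omega⟩ ⟨k, hk⟩ ∈ T :=
    ⟨mem_PhiB.2 (Or.inl ⟨_, _, hk₀, rfl⟩), by simp [fundWeight, hk₀]⟩
  rw [← ncard_setOf_mem_PhiB_fundWeight_pos hk.le]
  constructor
  · intro h
    rw [← Set.eq_of_subset_of_ncard_le hsub h.ge (finite_PhiB.subset fun _ => And.left)] at hroot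
    have hneg := hroot.2
    simp [fundWeight, hk₀] at hneg
    linarith
  · intro ht
    congr 1
    refine hsub.antisymm fun α ⟨hα, hu⟩ => ⟨hα, ?_⟩
    rw [sub_dotProduct, smul_dotProduct, smul_eq_mul, sub_neg]
    exact (dotProduct_le_of_fundWeight_pos hb hb0 hk hα hu).trans_lt (mul_lt_mul_of_pos_right ht hu)

end
section

variable {n k : ℕ} {a : ℕ → ℤ}

lemma wB_eq_sub_smul (t : ℤ) : wB n k a t = wB n k a 0 - (t : ℝ) • fundWeight k := by
  ext i
  simp only [wB, fundWeight, Nat.add_one_le_iff, Pi.sub_apply, Pi.smul_apply, smul_eq_mul]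
  split_ifs <;> simp

lemma wB_zero_antitone (ha : ∀ u, 1 ≤ u → u ≤ n → 0 ≤ a u) : Antitone (wB n k a 0) := by
  intro i j hij
  have hsum : ∑ u ∈ Icc (j.val + 1) (n - 1), (a u : ℝ) ≤ ∑ u ∈ Icc (i.val + 1) (n - 1), (a u : ℝ) :=
    sum_le_sum_of_subset_of_nonneg (Icc_subset_Icc (by simpa using hij) le_rfl) fun u hu _ => by
      have := mem_Icc.1 hu
      exact_mod_cast ha u (by omega) (by omega)
  have hij' : (i : ℝ) ≤ j := by exact_mod_cast hij
  simp only [wB, Int.cast_zero, ite_self, sub_zero]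
  linarith

lemma wB_zero_nonneg (ha : ∀ u, 1 ≤ u → u ≤ n → 0 ≤ a u) (i : Fin n) : 0 ≤ wB n k a 0 i := by
  have hsum : 0 ≤ ∑ u ∈ Icc (i.val + 1) (n - 1), (a u : ℝ) := sum_nonneg fun u hu => by
    have := mem_Icc.1 hu
    exact_mod_cast ha u (by omega) (by omega)
  have han : (0 : ℝ) ≤ a n := by exact_mod_cast ha n i.pos le_rfl
  have hi : (i : ℝ) + 1 ≤ n := by exact_mod_cast i.isLt
  simp only [wB, Int.cast_zero, ite_self, sub_zero]
  linarith

lemma wB_zero_add_wB_zero (hk : k < n) :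
    wB n k a 0 ⟨0, by omega⟩ + wB n k a 0 ⟨k, hk⟩ = MB n k a := by
  simp only [wB, MB, Int.cast_zero, ite_self, sub_zero]
  push_cast
  ring

end

theorem top_index_criterion_B_lt_general (n k : ℕ) (hk1 : 1 ≤ k) (hkn : k ≤ n - 1)
    (a : ℕ → ℤ) (ha : ∀ u, 1 ≤ u → u ≤ n → 0 ≤ a u) (t : ℤ) :
    {α ∈ PhiB n | ip n (wB n k a t) α < 0}.ncard = k * (4 * n + 1 - 3 * k) / 2 ↔
      MB n k a < t := by
  have hk : k < n := by omega
  simp only [ip_eq_dotProduct]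
  rw [wB_eq_sub_smul,
    ncard_setOf_mem_PhiB_neg_eq_iff (wB_zero_antitone ha) (wB_zero_nonneg ha) hk1 hk,
    wB_zero_add_wB_zero hk]
  exact_mod_cast Iff.rfl

/-- Top-index criterion of type `B`, `k < n`: `λ+ρ-tλ_k` is regular of index
`dim Bₙ/P(α_k) = k(4n+1-3k)/2` iff `t > M^B_{k,a}`. -/
theorem top_index_criterion_B_lt (n k : ℕ) (hn : 2 ≤ n) (hk1 : 1 ≤ k) (hkn : k ≤ n - 1)
    (a : ℕ → ℤ) (ha : ∀ u, 1 ≤ u → u ≤ n → 0 ≤ a u) (t : ℤ) :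
    {α ∈ PhiB n | ip n (wB n k a t) α < 0}.ncard = k * (4 * n + 1 - 3 * k) / 2 ↔
      MB n k a < t :=
  top_index_criterion_B_lt_general n k hk1 hkn a ha t
end

section
/- (Top-index criterion of type C, k < n.) Let n ≥ 2 and 1 ≤ k ≤ n−1, and let a_1,…,a_n be nonnegative integers. Then for every integer t, the number of positive roots α ∈ Φ⁺_C with ⟨w(t), α⟩ < 0 equals k(4n+1−3k)/2 (the dimension of the isotropic Grassmannian C_n/P(α_k)) if and only if t > M^C_{k,a}. -/
/-!
Write `w(t) = c - t λ_k` with `c = λ + ρ`, whose coordinates are positive and weakly decreasing,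
and `λ_k = e_1 + ⋯ + e_k`. Positivity and monotonicity of `c` force every root that is negative
on `w(t)` to be `e_p + e_q` with `p ≤ k` or `e_p - e_q` with `p ≤ k < q`; these are the
`k(4n+1-3k)/2` roots of the nilradical of `P(α_k)`. Among them `e_1 + e_{k+1}`, with pairing
`c_1 + c_{k+1} - t`, is the last to become negative, so all of them are negative exactly when
`t > c_1 + c_{k+1} = M^C_{k,a}`.
-/

open Finset

/-- `M^C_{k,a}`, the largest entry of the step matrix. -/
def MC (n k : ℕ) (a : ℕ → ℤ) : ℤ :=
  (∑ u ∈ Icc 1 (n - 1), a u) + (∑ u ∈ Icc (k + 1) (n - 1), a u) + 2 * a n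
    + 2 * (n : ℤ) - (k : ℤ)

theorem Set.ncard_eq_card_iff_superset {α : Type*} {s : Set α} {t : Finset α} (h : s ⊆ t) :
    s.ncard = #t ↔ ↑t ⊆ s := by
  refine ⟨fun hst => (Set.eq_of_subset_of_ncard_le h ?_ t.finite_toSet).symm.subset, fun hts => ?_⟩
  · rw [Set.ncard_coe_finset, hst]
  · rw [h.antisymm hts, Set.ncard_coe_finset]

def sumRoot (n : ℕ) (p q : Fin n) : Fin n → ℝ :=
  fun i => (if i = p then (1:ℝ) else 0) + (if i = q then 1 else 0)

def diffRoot (n : ℕ) (p q : Fin n) : Fin n → ℝ :=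
  fun i => (if i = p then (1:ℝ) else 0) - (if i = q then 1 else 0)

theorem mem_PhiC {n : ℕ} {α : Fin n → ℝ} :
    α ∈ PhiC n ↔ (∃ p q, p ≤ q ∧ α = sumRoot n p q) ∨ ∃ p q, p < q ∧ α = diffRoot n p q :=
  Iff.rfl

theorem ip_sumRoot {n : ℕ} (w : Fin n → ℝ) (p q : Fin n) : ip n w (sumRoot n p q) = w p + w q := by
  simp [ip, sumRoot, mul_add, sum_add_distrib]

theorem ip_diffRoot {n : ℕ} (w : Fin n → ℝ) (p q : Fin n) :
    ip n w (diffRoot n p q) = w p - w q := by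
  simp [ip, diffRoot, mul_sub, sum_sub_distrib]

theorem sumRoot_ne_zero_iff {n : ℕ} {p q i : Fin n} : sumRoot n p q i ≠ 0 ↔ i = p ∨ i = q := by
  unfold sumRoot; split_ifs <;> simp_all

theorem diffRoot_ne_zero_iff {n : ℕ} {p q i : Fin n} (h : p ≠ q) :
    diffRoot n p q i ≠ 0 ↔ i = p ∨ i = q := by
  unfold diffRoot; split_ifs <;> simp_all

theorem eq_and_eq_of_forall_or_iff {α : Type*} [LinearOrder α] {p q p' q' : α}
    (hpq : p ≤ q) (hpq' : p' ≤ q') (h : ∀ i, i = p ∨ i = q ↔ i = p' ∨ i = q') :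
    p = p' ∧ q = q' := by
  rcases (h p).1 (.inl rfl) with h1 | h1 <;> rcases (h q).1 (.inr rfl) with h2 | h2 <;>
    rcases (h p').2 (.inl rfl) with h3 | h3 <;> rcases (h q').2 (.inr rfl) with h4 | h4 <;>
    constructor <;> order

theorem sumRoot_injOn (n : ℕ) :
    Set.InjOn (fun x : Fin n × Fin n => sumRoot n x.1 x.2) {x | x.1 ≤ x.2} := by
  intro x hx y hy hxy
  have := eq_and_eq_of_forall_or_iff hx hy fun i =>
    sumRoot_ne_zero_iff.symm.trans ((Iff.of_eq (congrArg (· i ≠ 0) hxy)).trans sumRoot_ne_zero_iff)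
  exact Prod.ext this.1 this.2

theorem diffRoot_injOn (n : ℕ) :
    Set.InjOn (fun x : Fin n × Fin n => diffRoot n x.1 x.2) {x | x.1 < x.2} := by
  intro x hx y hy hxy
  have hx : x.1 < x.2 := hx
  have hy : y.1 < y.2 := hy
  have := eq_and_eq_of_forall_or_iff hx.le hy.le fun i => (diffRoot_ne_zero_iff hx.ne).symm.trans
    ((Iff.of_eq (congrArg (· i ≠ 0) hxy)).trans (diffRoot_ne_zero_iff hy.ne))
  exact Prod.ext this.1 this.2

theorem sumRoot_ne_diffRoot {n : ℕ} (p q : Fin n) {p' q' : Fin n} (h : p' < q') :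
    sumRoot n p q ≠ diffRoot n p' q' := by
  intro heq
  have := congrFun heq q'
  simp only [sumRoot, diffRoot, if_neg h.ne'] at this
  split_ifs at this <;> norm_num at this

theorem card_filter_le_val {n k : ℕ} : #(univ.filter fun q : Fin n => k ≤ (q : ℕ)) = n - k := by
  have := card_filter_add_card_filter_not (s := univ) (fun q : Fin n => (q : ℕ) < k)
  simp only [Fin.card_filter_val_lt, not_lt, card_univ, Fintype.card_fin] at this
  omega

theorem card_le_and_val_lt {n k : ℕ} (hk : k ≤ n) :
    #(univ.filter fun x : Fin n × Fin n => x.1 ≤ x.2 ∧ (x.1 : ℕ) < k) = ∑ j ∈ range k, (n - j) := by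
  have hrow (p : Fin n) :
      #(univ.filter fun q => p ≤ q ∧ (p : ℕ) < k) = if (p : ℕ) < k then n - p else 0 := by
    split_ifs with hp <;> simp [hp, filter_le_eq_Ici]
  have hrange : (range n).filter (· < k) = range k := by ext; simp; omega
  rw [card_filter, Fintype.sum_prod_type]
  simp only [← card_filter, hrow]
  rw [Fin.sum_univ_eq_sum_range (fun j => if j < k then n - j else 0), ← sum_filter, hrange]

theorem card_val_lt_and_le {n k : ℕ} (hk : k ≤ n) :
    #(univ.filter fun x : Fin n × Fin n => (x.1 : ℕ) < k ∧ k ≤ (x.2 : ℕ)) = k * (n - k) := by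
  rw [← univ_product_univ, filter_product (fun p : Fin n => (p : ℕ) < k)
    (fun q : Fin n => k ≤ (q : ℕ)), card_product, Fin.card_filter_val_lt, min_eq_right hk,
    card_filter_le_val]

theorem two_mul_sum_range_sub {n k : ℕ} (hk : k ≤ n) :
    2 * ∑ j ∈ range k, (n - j) = k * (2 * n + 1 - k) := by
  induction k with
  | zero => simp
  | succ k ih =>
    rw [sum_range_succ, mul_add, ih (by omega)]
    zify [(by omega : k ≤ n), (by omega : k ≤ 2 * n + 1), (by omega : k + 1 ≤ 2 * n + 1)]
    ring

-- Indices are 0-based here: `p < k` is the paper's `p ≤ k`.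
noncomputable def nilradicalRootsC (n k : ℕ) : Finset (Fin n → ℝ) :=
  (univ.filter fun x : Fin n × Fin n => x.1 ≤ x.2 ∧ (x.1 : ℕ) < k).image
      (fun x => sumRoot n x.1 x.2) ∪
    (univ.filter fun x : Fin n × Fin n => (x.1 : ℕ) < k ∧ k ≤ (x.2 : ℕ)).image
      (fun x => diffRoot n x.1 x.2)

theorem card_nilradicalRootsC {n k : ℕ} (hk : k ≤ n) :
    #(nilradicalRootsC n k) = k * (4 * n + 1 - 3 * k) / 2 := by
  rw [nilradicalRootsC, card_union_of_disjoint,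
    card_image_of_injOn ((sumRoot_injOn n).mono fun x hx => (mem_filter.mp hx).2.1),
    card_image_of_injOn ((diffRoot_injOn n).mono fun x hx =>
      Fin.lt_def.mpr (by have := (mem_filter.mp hx).2; omega)),
    card_le_and_val_lt hk, card_val_lt_and_le hk]
  · have htwice : 2 * (∑ j ∈ range k, (n - j) + k * (n - k)) = k * (4 * n + 1 - 3 * k) := by
      rw [mul_add, two_mul_sum_range_sub hk]
      zify [hk, (by omega : k ≤ 2 * n + 1), (by omega : 3 * k ≤ 4 * n + 1)]
      ring
    omega
  · simp only [disjoint_left, mem_image, mem_filter, mem_univ, true_and]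
    rintro _ ⟨x, -, rfl⟩ ⟨y, hy, hxy⟩
    exact sumRoot_ne_diffRoot x.1 x.2 (Fin.lt_def.mpr (by omega)) hxy.symm

theorem mem_nilradicalRootsC {n k : ℕ} {α : Fin n → ℝ} :
    α ∈ nilradicalRootsC n k ↔ (∃ p q : Fin n, (p ≤ q ∧ (p : ℕ) < k) ∧ sumRoot n p q = α) ∨
      ∃ p q : Fin n, ((p : ℕ) < k ∧ k ≤ (q : ℕ)) ∧ diffRoot n p q = α := by
  simp [nilradicalRootsC]

def negRootsC (n : ℕ) (w : Fin n → ℝ) : Set (Fin n → ℝ) := {α ∈ PhiC n | ip n w α < 0}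

section WeightShift

variable {n k : ℕ} {c : Fin n → ℝ}

theorem negRootsC_subset_nilradicalRootsC (hc : Antitone c) (hpos : ∀ i, 0 < c i) (t : ℝ) :
    negRootsC n (fun i => c i - if (i : ℕ) < k then t else 0) ⊆ nilradicalRootsC n k := by
  rintro α ⟨hroot, hneg⟩
  rw [mem_coe, mem_nilradicalRootsC]
  rcases mem_PhiC.mp hroot with ⟨p, q, hpq, rfl⟩ | ⟨p, q, hpq, rfl⟩
  · rw [ip_sumRoot] at hneg
    have hp : (p : ℕ) < k := by
      have := Fin.le_def.mp hpq
      by_contra hp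
      rw [if_neg hp, if_neg (by omega)] at hneg
      linarith [hpos p, hpos q]
    exact .inl ⟨p, q, ⟨hpq, hp⟩, rfl⟩
  · rw [ip_diffRoot] at hneg
    have hpq' : (p : ℕ) < k ∧ k ≤ q := by
      have := Fin.lt_def.mp hpq
      have := hc hpq.le
      by_contra h
      split_ifs at hneg <;> first | omega | linarith
    exact .inr ⟨p, q, hpq', rfl⟩

theorem nilradicalRootsC_subset_negRootsC_iff (hc : Antitone c) (hpos : ∀ i, 0 < c i) {t : ℝ}
    (hk0 : 0 < k) (hk : k < n) :
    ↑(nilradicalRootsC n k) ⊆ negRootsC n (fun i => c i - if (i : ℕ) < k then t else 0) ↔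
      c ⟨0, hk0.trans hk⟩ + c ⟨k, hk⟩ < t := by
  set i₀ : Fin n := ⟨0, hk0.trans hk⟩
  set K : Fin n := ⟨k, hk⟩
  have hi₀ (i : Fin n) : c i ≤ c i₀ := hc (Fin.le_def.mpr i.val.zero_le)
  constructor
  · intro h
    have hmem : sumRoot n i₀ K ∈ nilradicalRootsC n k :=
      mem_nilradicalRootsC.mpr (.inl ⟨i₀, K, ⟨Fin.le_def.mpr k.zero_le, hk0⟩, rfl⟩)
    have := (h hmem).2
    rw [ip_sumRoot, if_pos hk0, if_neg (lt_irrefl k)] at this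
    linarith
  · intro ht
    have hti₀ : c i₀ < t := by linarith [hpos K]
    intro α hα
    rcases mem_nilradicalRootsC.mp hα with ⟨p, q, hpq, rfl⟩ | ⟨p, q, hpq, rfl⟩
    · refine ⟨Or.inl ⟨p, q, hpq.1, rfl⟩, ?_⟩
      rw [ip_sumRoot, if_pos hpq.2]
      split_ifs with hq
      · linarith [hi₀ p, hi₀ q]
      · linarith [hi₀ p, hc (show K ≤ q from Fin.le_def.mpr (not_lt.mp hq))]
    · refine ⟨Or.inr ⟨p, q, Fin.lt_def.mpr (by omega), rfl⟩, ?_⟩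
      rw [ip_diffRoot, if_pos hpq.1, if_neg (not_lt.mpr hpq.2)]
      linarith [hi₀ p, hpos q]

end WeightShift

noncomputable def lambdaRhoC (n : ℕ) (a : ℕ → ℤ) : Fin n → ℝ := fun i =>
  (∑ u ∈ Icc (i.val + 1) (n - 1), (a u : ℝ)) + (a n : ℝ) + 1 + ((n : ℝ) - (i.val + 1))

section LambdaRho

variable {n : ℕ} {a : ℕ → ℤ}

theorem wC_eq_lambdaRhoC (k : ℕ) (t : ℤ) :
    wC n k a t = fun i => lambdaRhoC n a i - if (i : ℕ) < k then (t : ℝ) else 0 := by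
  funext i
  simp only [wC, lambdaRhoC, Nat.add_one_le_iff]

theorem lambdaRhoC_antitone (ha : ∀ u, 1 ≤ u → u ≤ n → 0 ≤ a u) : Antitone (lambdaRhoC n a) := by
  intro i j hij
  have hsum : ∑ u ∈ Icc (j.val + 1) (n - 1), (a u : ℝ) ≤ ∑ u ∈ Icc (i.val + 1) (n - 1), (a u : ℝ) :=
    sum_le_sum_of_subset_of_nonneg (Icc_subset_Icc (by simpa using hij) le_rfl) fun u hu _ => by
      have := mem_Icc.mp hu
      exact_mod_cast ha u (by omega) (by omega)
  have : (i : ℝ) ≤ j := by exact_mod_cast hij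
  simp only [lambdaRhoC]
  linarith

theorem lambdaRhoC_pos (ha : ∀ u, 1 ≤ u → u ≤ n → 0 ≤ a u) (i : Fin n) : 0 < lambdaRhoC n a i := by
  have hsum : 0 ≤ ∑ u ∈ Icc (i.val + 1) (n - 1), (a u : ℝ) := sum_nonneg fun u hu => by
    have := mem_Icc.mp hu
    exact_mod_cast ha u (by omega) (by omega)
  have han : (0 : ℝ) ≤ a n := by exact_mod_cast ha n i.pos le_rfl
  have : (i : ℝ) + 1 ≤ n := by exact_mod_cast i.isLt
  simp only [lambdaRhoC]
  linarith

theorem MC_eq_lambdaRhoC {k : ℕ} (hk : k < n) :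
    (MC n k a : ℝ) = lambdaRhoC n a ⟨0, by omega⟩ + lambdaRhoC n a ⟨k, hk⟩ := by
  simp only [MC, lambdaRhoC]
  push_cast
  ring

end LambdaRho

theorem top_index_criterion_C_lt_general (n k : ℕ) (hk1 : 1 ≤ k) (hkn : k ≤ n - 1)
    (a : ℕ → ℤ) (ha : ∀ u, 1 ≤ u → u ≤ n → 0 ≤ a u) (t : ℤ) :
    {α ∈ PhiC n | ip n (wC n k a t) α < 0}.ncard = k * (4 * n + 1 - 3 * k) / 2 ↔
      MC n k a < t := by
  have hk : k < n := by omega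
  change (negRootsC n (wC n k a t)).ncard = _ ↔ _
  rw [← card_nilradicalRootsC hk.le, wC_eq_lambdaRhoC,
    Set.ncard_eq_card_iff_superset
      (negRootsC_subset_nilradicalRootsC (lambdaRhoC_antitone ha) (lambdaRhoC_pos ha) t),
    nilradicalRootsC_subset_negRootsC_iff (lambdaRhoC_antitone ha) (lambdaRhoC_pos ha) hk1 hk,
    ← MC_eq_lambdaRhoC hk, Int.cast_lt]

/-- Top-index criterion of type `C`, `k < n`: `λ+ρ-tλ_k` is regular of index
`dim Cₙ/P(α_k) = k(4n+1-3k)/2` iff `t > M^C_{k,a}`. -/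
theorem top_index_criterion_C_lt (n k : ℕ) (hn : 2 ≤ n) (hk1 : 1 ≤ k) (hkn : k ≤ n - 1)
    (a : ℕ → ℤ) (ha : ∀ u, 1 ≤ u → u ≤ n → 0 ≤ a u) (t : ℤ) :
    {α ∈ PhiC n | ip n (wC n k a t) α < 0}.ncard = k * (4 * n + 1 - 3 * k) / 2 ↔
      MC n k a < t :=
  top_index_criterion_C_lt_general n k hk1 hkn a ha t
end

section
/- (Combinatorial content of Corollary 3.14(1), type B, highest weight supported below k.) Let n ≥ 3 and 2 ≤ k ≤ n−1, and let a_1,…,a_n be integers with a_u = 0 for all k ≤ u ≤ n and 0 ≤ a_u ≤ 2n−2k for all 1 ≤ u ≤ k−1. Then every integer l with 1 ≤ l ≤ M^B_{k,a} belongs to the step-matrix entry set S^B_{k,a}. -/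
open Finset

/-!
Write `A_i = a_{k+1-i} + ⋯ + a_{k-1}` (`lowerSum a k i`); since `a` vanishes on `[k, n]`, every
sum in `S^B_{k,a}` indexed by `i` equals `A_i`. The first two families then contain the window
`[A_i + i, A_i + i + 2(n-k))` for each `1 ≤ i ≤ k`. Consecutive windows start at most
`2(n-k) + 1` apart because `a_{k-i} ≤ 2(n-k)`, so together they cover `[1, M^B_{k,a}]` except
possibly the point `A_i + i + 2(n-k)` when `a_{k-i} = 2(n-k)`, and that point is the entry of
the third family at `(i, i + 1)`.
-/

theorem sum_Icc_eq_sum_Ico_of_vanishing {M : Type*} [AddCommMonoid M] {f : ℕ → M} {k n : ℕ}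
    (h0 : ∀ u, k ≤ u → u ≤ n → f u = 0) {s m : ℕ} (hs : s ≤ k) (hkm : k ≤ m + 1)
    (hmn : m ≤ n) :
    ∑ u ∈ Icc s m, f u = ∑ u ∈ Ico s k, f u := by
  rw [← Ico_add_one_right_eq_Icc, ← sum_Ico_consecutive f hs hkm,
    sum_eq_zero fun u hu => h0 u (mem_Ico.1 hu).1 (by have := (mem_Ico.1 hu).2; omega), add_zero]

theorem exists_window_or_gap {f : ℕ → ℤ} {L : ℤ} {k : ℕ} (hk : 1 ≤ k)
    (hf : ∀ i, 1 ≤ i → i < k → f (i + 1) ≤ f i + L + 1) {l : ℤ} (hl1 : f 1 ≤ l)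
    (hl2 : l < f k + L) :
    ∃ i, 1 ≤ i ∧ i ≤ k ∧
      (f i ≤ l ∧ l < f i + L ∨ i < k ∧ l = f i + L ∧ f (i + 1) = f i + L + 1) := by
  induction k, hk using Nat.le_induction with
  | base => exact ⟨1, le_rfl, le_rfl, .inl ⟨hl1, hl2⟩⟩
  | succ k hk ih =>
    by_cases hlk : l < f k + L
    · obtain ⟨i, hi1, hik, hi⟩ := ih (fun i hi1 hik => hf i hi1 (by omega)) hlk
      refine ⟨i, hi1, by omega, ?_⟩
      rcases hi with hwin | ⟨hik', hgap⟩
      · exact .inl hwin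
      · exact .inr ⟨by omega, hgap⟩
    · by_cases hlk' : f (k + 1) ≤ l
      · exact ⟨k + 1, by omega, le_rfl, .inl ⟨hlk', hl2⟩⟩
      · have := hf k hk (by omega)
        exact ⟨k, hk, by omega, .inr ⟨by omega, by omega, by omega⟩⟩

def lowerSum (a : ℕ → ℤ) (k i : ℕ) : ℤ :=
  ∑ u ∈ Ico (k + 1 - i) k, a u

section LowerSum

variable {a : ℕ → ℤ} {n k i : ℕ}

theorem lowerSum_one : lowerSum a k 1 = 0 := by
  simp [lowerSum]

theorem lowerSum_succ (hi : 1 ≤ i) (hik : i < k) :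
    lowerSum a k (i + 1) = a (k - i) + lowerSum a k i := by
  have hlo : k + 1 - (i + 1) = k - i := by omega
  have hlo' : k + 1 - i = k - i + 1 := by omega
  rw [lowerSum, lowerSum, hlo, hlo', sum_eq_sum_Ico_succ_bot (by omega)]

variable (h0 : ∀ u, k ≤ u → u ≤ n → a u = 0)
include h0

theorem sum_Icc_cast_eq_lowerSum (hi : 1 ≤ i) {m : ℕ} (hkm : k ≤ m + 1) (hmn : m ≤ n) :
    ∑ u ∈ Icc (k + 1 - i) m, (a u : ℚ) = lowerSum a k i := by
  have h0' : ∀ u, k ≤ u → u ≤ n → (a u : ℚ) = 0 := fun u hku hun => by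
    rw [h0 u hku hun, Int.cast_zero]
  rw [sum_Icc_eq_sum_Ico_of_vanishing h0' (by omega) hkm hmn, lowerSum, Int.cast_sum]

theorem MB_eq_lowerSum (hk : 1 ≤ k) (hkn : k < n) :
    MB n k a = lowerSum a k k + 2 * n - k - 1 := by
  have hlow : ∑ u ∈ Icc 1 (n - 1), a u = lowerSum a k k := by
    rw [sum_Icc_eq_sum_Ico_of_vanishing h0 hk (by omega) (by omega), lowerSum,
      Nat.add_sub_cancel_left]
  have hhigh : ∑ u ∈ Icc (k + 1) (n - 1), a u = 0 :=
    sum_eq_zero fun u hu => h0 u (by have := (mem_Icc.1 hu).1; omega)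
      (by have := (mem_Icc.1 hu).2; omega)
  rw [MB, hlow, hhigh, h0 n hkn.le le_rfl]
  ring

theorem mem_SB_first_family (hkn : k < n) (hi1 : 1 ≤ i) (hik : i ≤ k) {j : ℕ}
    (hj1 : 1 ≤ j) (hjn : j ≤ n - k) :
    ((lowerSum a k i + i + j - 1 : ℤ) : ℚ) ∈ SB n k a := by
  refine .inl (.inl ⟨i, j, hi1, hik, hj1, hjn, ?_⟩)
  rw [sum_Icc_cast_eq_lowerSum h0 hi1 (by omega) (by omega)]
  push_cast
  ring

theorem mem_SB_second_family (hkn : k < n) (hi1 : 1 ≤ i) (hik : i ≤ k) {j : ℕ}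
    (hj1 : 1 ≤ j) (hjn : j ≤ n - k) :
    ((lowerSum a k i + (n - k) + i + j - 1 : ℤ) : ℚ) ∈ SB n k a := by
  refine .inl (.inr ⟨i, j, hi1, hik, hj1, hjn, ?_⟩)
  have htail : ∑ u ∈ Icc (n + 1 - j) (n - 1), (a u : ℚ) = 0 :=
    sum_eq_zero fun u hu => by
      rw [h0 u (by have := (mem_Icc.1 hu).1; omega) (by have := (mem_Icc.1 hu).2; omega),
        Int.cast_zero]
  rw [sum_Icc_cast_eq_lowerSum h0 hi1 (by omega) (by omega), htail, h0 n hkn.le le_rfl]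
  push_cast
  ring

theorem mem_SB_of_window (hkn : k < n) (hi1 : 1 ≤ i) (hik : i ≤ k) {l : ℤ}
    (hl1 : lowerSum a k i + i ≤ l) (hl2 : l < lowerSum a k i + i + 2 * ((n : ℤ) - k)) :
    (l : ℚ) ∈ SB n k a := by
  by_cases hl : l < lowerSum a k i + i + ((n : ℤ) - k)
  · obtain ⟨j, hj⟩ : ∃ j : ℕ, (j : ℤ) = l - lowerSum a k i - i + 1 :=
      ⟨_, Int.toNat_of_nonneg (by omega)⟩
    obtain rfl : l = lowerSum a k i + i + j - 1 := by omega
    exact mem_SB_first_family h0 hkn hi1 hik (by omega) (by omega)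
  · obtain ⟨j, hj⟩ : ∃ j : ℕ, (j : ℤ) = l - lowerSum a k i - i - ((n : ℤ) - k) + 1 :=
      ⟨_, Int.toNat_of_nonneg (by omega)⟩
    obtain rfl : l = lowerSum a k i + ((n : ℤ) - k) + i + j - 1 := by omega
    exact mem_SB_second_family h0 hkn hi1 hik (by omega) (by omega)

theorem mem_SB_of_gap (hkn : k < n) (hi1 : 1 ≤ i) (hik : i < k)
    (hjump : lowerSum a k (i + 1) = lowerSum a k i + 2 * ((n : ℤ) - k)) :
    ((lowerSum a k i + i + 2 * ((n : ℤ) - k) : ℤ) : ℚ) ∈ SB n k a := by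
  refine .inr ⟨i, i + 1, hi1, by omega, by omega, ?_⟩
  rw [sum_Icc_cast_eq_lowerSum h0 hi1 (by omega) (by omega),
    sum_Icc_cast_eq_lowerSum h0 (by omega) (by omega) (by omega), hjump, h0 n hkn.le le_rfl]
  push_cast
  ring

end LowerSum

theorem cor_B_lt_support_below_general (n k : ℕ) (hk1 : 2 ≤ k) (hkn : k ≤ n - 1)
    (a : ℕ → ℤ) (h0 : ∀ u, k ≤ u → u ≤ n → a u = 0)
    (hb : ∀ u, 1 ≤ u → u ≤ k - 1 → 0 ≤ a u ∧ a u ≤ 2 * (n : ℤ) - 2 * (k : ℤ)) :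
    ∀ l : ℤ, 1 ≤ l → l ≤ MB n k a → (l : ℚ) ∈ SB n k a := by
  intro l hl1 hl2
  have hkn' : k < n := by omega
  have hjump : ∀ i, 1 ≤ i → i < k →
      lowerSum a k (i + 1) + (i + 1 : ℕ) ≤ lowerSum a k i + i + 2 * ((n : ℤ) - k) + 1 := by
    intro i hi hik
    have := (hb (k - i) (by omega) (by omega)).2
    rw [lowerSum_succ hi hik]
    push_cast
    linarith
  rw [MB_eq_lowerSum h0 (by omega) hkn'] at hl2
  obtain ⟨i, hi1, hik, hwin | ⟨hik', rfl, hgap⟩⟩ :=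
    exists_window_or_gap (f := fun i => lowerSum a k i + i) (L := 2 * ((n : ℤ) - k)) (l := l)
      (by omega) hjump (by simp only [lowerSum_one]; omega) (by omega)
  · exact mem_SB_of_window h0 hkn' hi1 hik hwin.1 hwin.2
  · exact mem_SB_of_gap h0 hkn' hi1 hik' (by push_cast at hgap; linarith)

/-- Corollary 3.14(1) for `Bₙ/P(α_k)`: if the highest weight is supported below `k`
with coefficients at most `2n-2k`, then every integer in `[1, M^B_{k,a}]` is an entry
of the step matrix. -/
theorem cor_B_lt_support_below (n k : ℕ) (hn : 3 ≤ n) (hk1 : 2 ≤ k) (hkn : k ≤ n - 1)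
    (a : ℕ → ℤ) (h0 : ∀ u, k ≤ u → u ≤ n → a u = 0)
    (hb : ∀ u, 1 ≤ u → u ≤ k - 1 → 0 ≤ a u ∧ a u ≤ 2 * (n : ℤ) - 2 * (k : ℤ)) :
    ∀ l : ℤ, 1 ≤ l → l ≤ MB n k a → (l : ℚ) ∈ SB n k a :=
  cor_B_lt_support_below_general n k hk1 hkn a h0 hb
end

section
/- (Combinatorial content of Corollary 3.14(2), type B, highest weight supported above k.) Let n ≥ 3 and 2 ≤ k ≤ n−1, and let a_1,…,a_n be nonnegative integers with a_u = 0 for all 1 ≤ u ≤ k. Then every integer l with 1 ≤ l ≤ M^B_{k,a} belongs to the step-matrix entry set S^B_{k,a} if and only if a_i ≤ k−1 for all k+1 ≤ i ≤ n−1 and a_n ≤ 2k−1. -/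
open Finset

/-!
Write `A = a_{k+1} + ⋯ + a_{n-1}`. Since `a` vanishes on `[1, k]`, the entries of the first family
with a fixed `j` form a run of `k` consecutive integers, and consecutive runs start `a_{k+j} + 1`
apart. So the runs tile `[1, A + n - 1]` exactly when every `a_i ≤ k - 1`; a gap `a_p ≥ k` leaves
out the integer just after the run ending before it. The second family tiles
`[A + a_n + n - k + 1, M]` in the same way. The third family consists of the integers `l` with
`2l ∈ [2A + a_n + 2n - 2k + 1, 2A + a_n + 2n - 1]`, which bridges the two blocks iff
`a_n ≤ 2k - 1`; otherwise `A + n` is missed.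
-/
lemma sum_Icc_eq_sum_Icc_of_forall_Ico_eq_zero {M : Type*} [AddCommMonoid M] {f : ℕ → M}
    {c d : ℕ} (hcd : c ≤ d) (hf : ∀ u ∈ Ico c d, f u = 0) (m : ℕ) :
    ∑ u ∈ Icc c m, f u = ∑ u ∈ Icc d m, f u := by
  refine (sum_subset (Icc_subset_Icc_left hcd) fun u hu hud => hf u ?_).symm
  simp only [mem_Icc, mem_Ico] at hu hud ⊢
  omega

lemma exists_mem_Icc_mem_Ico_of_le_add {α : Type*} [LinearOrder α] [Add α]
    {f : ℕ → α} {K : α} {s m : ℕ} (hsm : s ≤ m)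
    (hstep : ∀ j, s ≤ j → j < m → f (j + 1) ≤ f j + K) {x : α}
    (hx₁ : f s ≤ x) (hx₂ : x < f m + K) : ∃ j ∈ Icc s m, f j ≤ x ∧ x < f j + K := by
  induction m, hsm using Nat.le_induction with
  | base => exact ⟨s, left_mem_Icc.2 le_rfl, hx₁, hx₂⟩
  | succ m hsm ih =>
    by_cases hx : x < f m + K
    · obtain ⟨j, hj, hjx⟩ := ih (fun j hj hjm => hstep j hj (by omega)) hx
      exact ⟨j, Icc_subset_Icc_right m.le_succ hj, hjx⟩
    · exact ⟨m + 1, mem_Icc.2 ⟨by omega, le_rfl⟩,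
        (hstep m hsm m.lt_succ_self).trans (not_lt.1 hx), hx₂⟩

def tailSum (n k : ℕ) (a : ℕ → ℤ) : ℤ := ∑ u ∈ Icc (k + 1) (n - 1), a u

/-- When `a` vanishes on `[1, k]`, the entries of the first family of `SB n k a` with a fixed `j`
are the `k` consecutive integers starting at `lowerRunStart k a j`, and likewise for the second
family and `upperRunStart n k a j`. -/
def lowerRunStart (k : ℕ) (a : ℕ → ℤ) (j : ℕ) : ℤ := ∑ u ∈ Icc (k + 1) (k + j - 1), a u + j

def upperRunStart (n k : ℕ) (a : ℕ → ℤ) (j : ℕ) : ℤ :=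
  tailSum n k a + a n + n - k + ∑ u ∈ Icc (n + 1 - j) (n - 1), a u + j

section StepMatrixB

variable {n k : ℕ} {a : ℕ → ℤ}

lemma cast_sum_Icc_sub_eq (h0 : ∀ u, 1 ≤ u → u ≤ k → a u = 0) {i : ℕ} (hik : i ≤ k) (m : ℕ) :
    ∑ u ∈ Icc (k + 1 - i) m, (a u : ℚ) = ((∑ u ∈ Icc (k + 1) m, a u : ℤ) : ℚ) := by
  rw [Int.cast_sum]
  refine sum_Icc_eq_sum_Icc_of_forall_Ico_eq_zero (by omega) (fun u hu => ?_) m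
  rw [mem_Ico] at hu
  rw [h0 u (by omega) (by omega), Int.cast_zero]

lemma exists_eq_lowerEntry_iff (h0 : ∀ u, 1 ≤ u → u ≤ k → a u = 0) (l : ℤ) :
    (∃ i j : ℕ, 1 ≤ i ∧ i ≤ k ∧ 1 ≤ j ∧ j ≤ n - k ∧
      (l : ℚ) = (∑ u ∈ Icc (k + 1 - i) (k + j - 1), (a u : ℚ)) + i + j - 1) ↔
    ∃ j ∈ Icc 1 (n - k), lowerRunStart k a j ≤ l ∧ l < lowerRunStart k a j + k := by
  have key : ∀ i j : ℕ, i ≤ k →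
      ((l : ℚ) = (∑ u ∈ Icc (k + 1 - i) (k + j - 1), (a u : ℚ)) + i + j - 1 ↔
        l = lowerRunStart k a j + i - 1) := by
    intro i j hik
    rw [cast_sum_Icc_sub_eq h0 hik, ← @Int.cast_inj ℚ]
    push_cast [lowerRunStart]
    constructor <;> intro h <;> linarith
  constructor
  · rintro ⟨i, j, hi, hik, hj, hjn, hl⟩
    rw [key i j hik] at hl
    exact ⟨j, mem_Icc.2 ⟨hj, hjn⟩, by omega, by omega⟩
  · rintro ⟨j, hj, hlo, hhi⟩
    rw [mem_Icc] at hj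
    set i := (l - lowerRunStart k a j + 1).toNat
    refine ⟨i, j, by omega, by omega, hj.1, hj.2, ?_⟩
    rw [key i j (by omega)]
    omega

lemma exists_eq_upperEntry_iff (h0 : ∀ u, 1 ≤ u → u ≤ k → a u = 0) (l : ℤ) :
    (∃ i j : ℕ, 1 ≤ i ∧ i ≤ k ∧ 1 ≤ j ∧ j ≤ n - k ∧
      (l : ℚ) = (∑ u ∈ Icc (k + 1 - i) (n - 1), (a u : ℚ))
        + (∑ u ∈ Icc (n + 1 - j) (n - 1), (a u : ℚ)) + (a n : ℚ) + n - k + i + j - 1) ↔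
    ∃ j ∈ Icc 1 (n - k), upperRunStart n k a j ≤ l ∧ l < upperRunStart n k a j + k := by
  have key : ∀ i j : ℕ, i ≤ k →
      ((l : ℚ) = (∑ u ∈ Icc (k + 1 - i) (n - 1), (a u : ℚ))
        + (∑ u ∈ Icc (n + 1 - j) (n - 1), (a u : ℚ)) + (a n : ℚ) + n - k + i + j - 1 ↔
        l = upperRunStart n k a j + i - 1) := by
    intro i j hik
    rw [cast_sum_Icc_sub_eq h0 hik, ← @Int.cast_inj ℚ]
    push_cast [upperRunStart, tailSum]
    constructor <;> intro h <;> linarith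
  constructor
  · rintro ⟨i, j, hi, hik, hj, hjn, hl⟩
    rw [key i j hik] at hl
    exact ⟨j, mem_Icc.2 ⟨hj, hjn⟩, by omega, by omega⟩
  · rintro ⟨j, hj, hlo, hhi⟩
    rw [mem_Icc] at hj
    set i := (l - upperRunStart n k a j + 1).toNat
    refine ⟨i, j, by omega, by omega, hj.1, hj.2, ?_⟩
    rw [key i j (by omega)]
    omega

lemma exists_eq_middleEntry_iff (h0 : ∀ u, 1 ≤ u → u ≤ k → a u = 0) (l : ℤ) :
    (∃ i j : ℕ, 1 ≤ i ∧ i ≤ j ∧ j ≤ k ∧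
      (l : ℚ) = ((∑ u ∈ Icc (k + 1 - i) (n - 1), (a u : ℚ))
        + (∑ u ∈ Icc (k + 1 - j) (n - 1), (a u : ℚ)) + (a n : ℚ)
        + i + j + 2 * n - 2 * k - 1) / 2) ↔
    2 * tailSum n k a + a n + 2 * n - 2 * k + 1 ≤ 2 * l ∧
      2 * l ≤ 2 * tailSum n k a + a n + 2 * n - 1 := by
  have key : ∀ i j : ℕ, i ≤ k → j ≤ k →
      ((l : ℚ) = ((∑ u ∈ Icc (k + 1 - i) (n - 1), (a u : ℚ))
        + (∑ u ∈ Icc (k + 1 - j) (n - 1), (a u : ℚ)) + (a n : ℚ)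
        + i + j + 2 * n - 2 * k - 1) / 2 ↔
      2 * l = 2 * tailSum n k a + a n + 2 * n - 2 * k - 1 + i + j) := by
    intro i j hik hjk
    rw [cast_sum_Icc_sub_eq h0 hik, cast_sum_Icc_sub_eq h0 hjk, eq_div_iff two_ne_zero,
      ← @Int.cast_inj ℚ]
    push_cast [tailSum]
    constructor <;> intro h <;> linarith
  constructor
  · rintro ⟨i, j, hi, hij, hjk, hl⟩
    rw [key i j (by omega) hjk] at hl
    omega
  · rintro ⟨hlo, hhi⟩
    -- `i + j` runs through all of `[2, 2k]`
    set s := (2 * l - (2 * tailSum n k a + a n + 2 * n - 2 * k - 1)).toNat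
    refine ⟨s / 2, s - s / 2, by omega, by omega, by omega, ?_⟩
    rw [key _ _ (by omega) (by omega)]
    omega

theorem intCast_mem_SB_iff (h0 : ∀ u, 1 ≤ u → u ≤ k → a u = 0) (l : ℤ) :
    (l : ℚ) ∈ SB n k a ↔
      (∃ j ∈ Icc 1 (n - k), lowerRunStart k a j ≤ l ∧ l < lowerRunStart k a j + k) ∨
      (∃ j ∈ Icc 1 (n - k), upperRunStart n k a j ≤ l ∧ l < upperRunStart n k a j + k) ∨
      (2 * tailSum n k a + a n + 2 * n - 2 * k + 1 ≤ 2 * l ∧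
        2 * l ≤ 2 * tailSum n k a + a n + 2 * n - 1) := by
  simp only [SB, Set.mem_union, Set.mem_ofPred_eq, or_assoc]
  exact or_congr (exists_eq_lowerEntry_iff h0 l)
    (or_congr (exists_eq_upperEntry_iff h0 l) (exists_eq_middleEntry_iff h0 l))

lemma MB_eq (h0 : ∀ u, 1 ≤ u → u ≤ k → a u = 0) :
    MB n k a = 2 * tailSum n k a + a n + 2 * n - k - 1 := by
  have hsum : ∑ u ∈ Icc 1 (n - 1), a u = tailSum n k a :=
    sum_Icc_eq_sum_Icc_of_forall_Ico_eq_zero (by omega)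
      (fun u hu => h0 u (mem_Ico.1 hu).1 (by have := (mem_Ico.1 hu).2; omega)) _
  rw [MB, hsum, tailSum]
  ring

lemma sum_Icc_nonneg_of_le (ha : ∀ u, 1 ≤ u → u ≤ n → 0 ≤ a u) {c m : ℕ} (hc : 1 ≤ c)
    (hm : m ≤ n) : 0 ≤ ∑ u ∈ Icc c m, a u :=
  sum_nonneg fun u hu => ha u (hc.trans (mem_Icc.1 hu).1) ((mem_Icc.1 hu).2.trans hm)

lemma tailSum_nonneg (ha : ∀ u, 1 ≤ u → u ≤ n → 0 ≤ a u) : 0 ≤ tailSum n k a :=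
  sum_Icc_nonneg_of_le ha k.succ_pos (n.sub_le 1)

lemma lowerRunStart_one : lowerRunStart k a 1 = 1 := by
  simp [lowerRunStart]

lemma lowerRunStart_succ {j : ℕ} (hj : 1 ≤ j) :
    lowerRunStart k a (j + 1) = lowerRunStart k a j + a (k + j) + 1 := by
  rw [lowerRunStart, lowerRunStart, show k + (j + 1) - 1 = k + j - 1 + 1 by omega,
    sum_Icc_succ_top (by omega), show k + j - 1 + 1 = k + j by omega]
  push_cast
  ring

lemma lowerRunStart_sub (hkn : k ≤ n) : lowerRunStart k a (n - k) = tailSum n k a + n - k := by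
  rw [lowerRunStart, tailSum, show k + (n - k) - 1 = n - 1 by omega, Nat.cast_sub hkn]
  ring

lemma lowerRunStart_mono (ha : ∀ u, 1 ≤ u → u ≤ n → 0 ≤ a u) {j j' : ℕ} (hjj' : j ≤ j')
    (hj' : j' ≤ n - k) : lowerRunStart k a j ≤ lowerRunStart k a j' := by
  have hsum : ∑ u ∈ Icc (k + 1) (k + j - 1), a u ≤ ∑ u ∈ Icc (k + 1) (k + j' - 1), a u :=
    sum_le_sum_of_subset_of_nonneg (Icc_subset_Icc_right (by omega)) fun u hu _ => by
      obtain ⟨hu₁, hu₂⟩ := mem_Icc.1 hu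
      exact ha u (by omega) (by omega)
  unfold lowerRunStart
  linarith [(Nat.cast_le (α := ℤ)).2 hjj']

lemma upperRunStart_one (hn : 1 ≤ n) :
    upperRunStart n k a 1 = tailSum n k a + a n + n - k + 1 := by
  rw [upperRunStart, Icc_eq_empty (by omega), sum_empty]
  push_cast
  ring

lemma upperRunStart_one_le (hn : 1 ≤ n) (ha : ∀ u, 1 ≤ u → u ≤ n → 0 ≤ a u) {j : ℕ}
    (hj : 1 ≤ j) (hjn : j ≤ n) : upperRunStart n k a 1 ≤ upperRunStart n k a j := by
  have hsum := sum_Icc_nonneg_of_le ha (show 1 ≤ n + 1 - j by omega) (n.sub_le 1)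
  rw [upperRunStart_one hn, upperRunStart]
  linarith [(Nat.cast_le (α := ℤ)).2 hj]

lemma upperRunStart_succ {j : ℕ} (hj : 1 ≤ j) (hjn : j < n) :
    upperRunStart n k a (j + 1) = upperRunStart n k a j + a (n - j) + 1 := by
  rw [upperRunStart, upperRunStart, show n + 1 - (j + 1) = n - j by omega,
    ← add_sum_Ioc_eq_sum_Icc (show n - j ≤ n - 1 by omega),
    show n + 1 - j = n - j + 1 by omega, Icc_add_one_left_eq_Ioc]
  push_cast
  ring

lemma upperRunStart_sub (hkn : k ≤ n) :
    upperRunStart n k a (n - k) = 2 * tailSum n k a + a n + 2 * n - 2 * k := by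
  rw [upperRunStart, show n + 1 - (n - k) = k + 1 by omega, ← tailSum, Nat.cast_sub hkn]
  ring

theorem intCast_mem_SB_of_le (hn : 1 ≤ n) (hkn : k ≤ n - 1) (h0 : ∀ u, 1 ≤ u → u ≤ k → a u = 0)
    (hai : ∀ i, k + 1 ≤ i → i ≤ n - 1 → a i ≤ (k : ℤ) - 1) (han : a n ≤ 2 * (k : ℤ) - 1)
    {l : ℤ} (hl₁ : 1 ≤ l) (hl₂ : l ≤ MB n k a) : (l : ℚ) ∈ SB n k a := by
  rw [intCast_mem_SB_iff h0]
  rw [MB_eq h0] at hl₂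
  by_cases hlower : l < tailSum n k a + n
  · refine Or.inl (exists_mem_Icc_mem_Ico_of_le_add (by omega) (fun j hj hjn => ?_)
      (by rwa [lowerRunStart_one]) (by rw [lowerRunStart_sub (by omega)]; omega))
    have := hai (k + j) (by omega) (by omega)
    rw [lowerRunStart_succ hj]
    omega
  by_cases hmiddle : l < upperRunStart n k a 1
  · rw [upperRunStart_one hn] at hmiddle
    exact Or.inr (Or.inr ⟨by omega, by omega⟩)
  · refine Or.inr (Or.inl (exists_mem_Icc_mem_Ico_of_le_add (by omega) (fun j hj hjn => ?_)
      (not_lt.1 hmiddle) (by rw [upperRunStart_sub (by omega)]; omega)))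
    have := hai (n - j) (by omega) (by omega)
    rw [upperRunStart_succ hj (by omega)]
    omega

theorem lowerRunStart_add_notMem_SB (hn : 1 ≤ n)
    (ha : ∀ u, 1 ≤ u → u ≤ n → 0 ≤ a u) (h0 : ∀ u, 1 ≤ u → u ≤ k → a u = 0) {p : ℕ}
    (hp₁ : k + 1 ≤ p) (hp₂ : p ≤ n - 1) (hap : (k : ℤ) ≤ a p) :
    ((lowerRunStart k a (p - k) + k : ℤ) : ℚ) ∉ SB n k a := by
  have hgap : lowerRunStart k a (p - k + 1) = lowerRunStart k a (p - k) + a p + 1 := by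
    rw [lowerRunStart_succ (by omega), Nat.add_sub_cancel' (by omega)]
  have htop : lowerRunStart k a (p - k + 1) ≤ tailSum n k a + n - k := by
    rw [← lowerRunStart_sub (n := n) (by omega)]
    exact lowerRunStart_mono ha (by omega) le_rfl
  have han := ha n hn le_rfl
  rw [intCast_mem_SB_iff h0]
  rintro (⟨j, hj, hjx, hxj⟩ | ⟨j, hj, hjx, -⟩ | ⟨hx, -⟩)
  · rw [mem_Icc] at hj
    rcases le_or_gt j (p - k) with hjp | hjp
    · have := lowerRunStart_mono ha hjp (show p - k ≤ n - k by omega)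
      omega
    · have := lowerRunStart_mono ha (show p - k + 1 ≤ j by omega) hj.2
      omega
  · obtain ⟨hj₁, hj₂⟩ := mem_Icc.1 hj
    have := upperRunStart_one_le (k := k) hn ha hj₁ (by omega)
    rw [upperRunStart_one hn] at this
    omega
  · omega

theorem tailSum_add_notMem_SB (hn : 1 ≤ n)
    (ha : ∀ u, 1 ≤ u → u ≤ n → 0 ≤ a u) (h0 : ∀ u, 1 ≤ u → u ≤ k → a u = 0)
    (han : 2 * (k : ℤ) ≤ a n) : ((tailSum n k a + n : ℤ) : ℚ) ∉ SB n k a := by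
  rw [intCast_mem_SB_iff h0]
  rintro (⟨j, hj, -, hxj⟩ | ⟨j, hj, hjx, -⟩ | ⟨hx, -⟩)
  · obtain ⟨hj₁, hj₂⟩ := mem_Icc.1 hj
    have := lowerRunStart_mono ha hj₂ le_rfl
    rw [lowerRunStart_sub (by omega)] at this
    omega
  · obtain ⟨hj₁, hj₂⟩ := mem_Icc.1 hj
    have := upperRunStart_one_le (k := k) hn ha hj₁ (by omega)
    rw [upperRunStart_one hn] at this
    omega
  · omega

end StepMatrixB

theorem cor_B_lt_support_above_general (n k : ℕ) (hn : 3 ≤ n) (hkn : k ≤ n - 1)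
    (a : ℕ → ℤ) (ha : ∀ u, 1 ≤ u → u ≤ n → 0 ≤ a u)
    (h0 : ∀ u, 1 ≤ u → u ≤ k → a u = 0) :
    (∀ l : ℤ, 1 ≤ l → l ≤ MB n k a → (l : ℚ) ∈ SB n k a) ↔
      ((∀ i, k + 1 ≤ i → i ≤ n - 1 → a i ≤ (k : ℤ) - 1) ∧ a n ≤ 2 * (k : ℤ) - 1) := by
  have hn₁ : 1 ≤ n := by omega
  have hA := tailSum_nonneg (k := k) ha
  have hMB := MB_eq (n := n) h0
  refine ⟨fun hcov => ⟨fun p hp₁ hp₂ => ?_, ?_⟩,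
    fun ⟨hai, han⟩ l hl₁ hl₂ => intCast_mem_SB_of_le hn₁ hkn h0 hai han hl₁ hl₂⟩
  · by_contra! hap
    have hlo := lowerRunStart_mono (k := k) ha (show 1 ≤ p - k by omega) (by omega)
    have hhi := lowerRunStart_mono (k := k) ha (show p - k ≤ n - k by omega) le_rfl
    rw [lowerRunStart_one] at hlo
    rw [lowerRunStart_sub (n := n) (by omega)] at hhi
    exact lowerRunStart_add_notMem_SB hn₁ ha h0 hp₁ hp₂ (by omega)
      (hcov _ (by omega) (by have := ha n hn₁ le_rfl; omega))
  · by_contra! han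
    exact tailSum_add_notMem_SB hn₁ ha h0 (by omega) (hcov _ (by omega) (by omega))

/-- Corollary 3.14(2) for `Bₙ/P(α_k)`: for a highest weight supported above `k`,
every integer in `[1, M^B_{k,a}]` is an entry of the step matrix iff
`a_i ≤ k-1` for `k+1 ≤ i ≤ n-1` and `a_n ≤ 2k-1`. -/
theorem cor_B_lt_support_above (n k : ℕ) (hn : 3 ≤ n) (hk1 : 2 ≤ k) (hkn : k ≤ n - 1)
    (a : ℕ → ℤ) (ha : ∀ u, 1 ≤ u → u ≤ n → 0 ≤ a u)
    (h0 : ∀ u, 1 ≤ u → u ≤ k → a u = 0) :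
    (∀ l : ℤ, 1 ≤ l → l ≤ MB n k a → (l : ℚ) ∈ SB n k a) ↔
      ((∀ i, k + 1 ≤ i → i ≤ n - 1 → a i ≤ (k : ℤ) - 1) ∧ a n ≤ 2 * (k : ℤ) - 1) :=
  cor_B_lt_support_above_general n k hn hkn a ha h0
end

section
/- (Combinatorial content of Corollary 3.15, type B, k = n.) Let n ≥ 3 and let a_1,…,a_n be integers with a_1 = a_{n−1} = a_n = 0 and 0 ≤ a_u ≤ 1 for all 2 ≤ u ≤ n−2. Then every integer l with 1 ≤ l ≤ M^B_{n,a} = 2Σ_{u=2}^{n−2} a_u + 2n − 1 belongs to the step-matrix entry set S^B_{n,a}. -/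
/-!
Write `g i = ∑_{u=n+1-i}^{n-1} a_u + i`, so that the entries of `S^B_{n,a}` are the numbers
`g i + g j - 1` with `1 ≤ i ≤ j ≤ n`. The hypotheses give `g 1 = 1`, `g 2 = 2`,
`g (n-1) = g n - 1`, `g n = ∑_{u=2}^{n-2} a_u + n` and `g (i+1) - g i = a_{n-i} + 1 ≤ 2`.
Every integer of `[1, g n]` therefore lies in a gap `[g j, g (j+1)]` of length at most two;
pairing `j` or `j + 1` with `i ∈ {1, 2}` covers `[1, g n]`, and pairing with `n - 1` or `n`
covers `[g n, 2 g n - 1]`.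
-/

open Finset

/-- The step-matrix entry set `S^B_{n,a}` (the case `k = n`). -/
def SBn (n : ℕ) (a : ℕ → ℤ) : Set ℚ :=
  {x | ∃ i j : ℕ, 1 ≤ i ∧ i ≤ j ∧ j ≤ n ∧
    x = (∑ u ∈ Icc (n + 1 - i) (n - 1), (a u : ℚ))
      + (∑ u ∈ Icc (n + 1 - j) (n - 1), (a u : ℚ)) + (a n : ℚ) + i + j - 1}

theorem exists_apply_le_le_apply_succ {α : Type*} [LinearOrder α] (g : ℕ → α) {m n : ℕ}
    (hmn : m < n) {t : α} (hm : g m ≤ t) (hn : t ≤ g n) :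
    ∃ j, m ≤ j ∧ j < n ∧ g j ≤ t ∧ t ≤ g (j + 1) := by
  induction n, hmn using Nat.le_induction with
  | base => exact ⟨m, le_rfl, Nat.lt_succ_self m, hm, hn⟩
  | succ n hmn ih =>
    by_cases ht : t ≤ g n
    · obtain ⟨j, hmj, hjn, hj⟩ := ih ht
      exact ⟨j, hmj, by omega, hj⟩
    · exact ⟨n, by omega, Nat.lt_succ_self n, le_of_not_ge ht, hn⟩

theorem exists_eq_add_sub_one_of_step_le_two (g : ℕ → ℤ) {n : ℕ} (hn : 2 ≤ n) (hg1 : g 1 = 1)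
    (hg2 : g 2 = 2) (hgn : g (n - 1) + 1 = g n)
    (hstep : ∀ i, 1 ≤ i → i < n → g (i + 1) ≤ g i + 2)
    {l : ℤ} (hl : 1 ≤ l) (hl' : l ≤ 2 * g n - 1) :
    ∃ i j, 1 ≤ i ∧ i ≤ j ∧ j ≤ n ∧ l = g i + g j - 1 := by
  by_cases hlow : l ≤ g n
  · obtain ⟨j, hj1, hjn, hjl, hlj⟩ :=
      exists_apply_le_le_apply_succ g (by omega : 1 < n) (by omega) hlow
    have := hstep j hj1 hjn
    by_cases hl₀ : l = g j
    · exact ⟨1, j, le_rfl, hj1, hjn.le, by omega⟩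
    by_cases hl₁ : l = g (j + 1)
    · exact ⟨1, j + 1, le_rfl, by omega, hjn, by omega⟩
    -- now `l = g j + 1`, which is `g 2 + g j - 1`, or `g 2` itself when `j = 1`
    rcases eq_or_lt_of_le hj1 with rfl | hj2
    · exact ⟨1, 2, le_rfl, by omega, hn, by omega⟩
    · exact ⟨2, j, by omega, hj2, hjn.le, by omega⟩
  · obtain ⟨j, hj1, hjn, hjt, htj⟩ :=
      exists_apply_le_le_apply_succ g (t := l + 1 - g n) (by omega : 1 < n) (by omega)
        (by omega)
    have := hstep j hj1 hjn
    by_cases ht₀ : l + 1 - g n = g j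
    · exact ⟨j, n, hj1, hjn.le, le_rfl, by omega⟩
    by_cases ht₁ : l + 1 - g n = g (j + 1)
    · exact ⟨j + 1, n, by omega, hjn, le_rfl, by omega⟩
    -- now `l + 1 - g n = g (j + 1) - 1`, and `j + 1 ≠ n` since `g (n - 1) = g n - 1`
    have hjn' : j + 1 < n := by
      refine lt_of_le_of_ne hjn fun hj => ?_
      rw [show n - 1 = j by omega, ← hj] at hgn
      omega
    exact ⟨j + 1, n - 1, by omega, by omega, by omega, by omega⟩

def stepHeight (n : ℕ) (a : ℕ → ℤ) (i : ℕ) : ℤ :=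
  (∑ u ∈ Icc (n + 1 - i) (n - 1), a u) + i

namespace stepHeight

variable {n : ℕ} {a : ℕ → ℤ}

theorem one (hn : 1 ≤ n) : stepHeight n a 1 = 1 := by
  rw [stepHeight, Nat.add_sub_cancel, Icc_eq_empty (by omega), sum_empty, Nat.cast_one,
    zero_add]

theorem succ {i : ℕ} (hi : 1 ≤ i) (hin : i < n) :
    stepHeight n a (i + 1) = stepHeight n a i + a (n - i) + 1 := by
  have hIcc : Icc (n - i) (n - 1) = insert (n - i) (Icc (n + 1 - i) (n - 1)) := by
    ext u; simp only [mem_Icc, mem_insert]; omega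
  rw [stepHeight, stepHeight, show n + 1 - (i + 1) = n - i by omega, hIcc,
    sum_insert (by simp only [mem_Icc]; omega)]
  push_cast
  ring

theorem self : stepHeight n a n = (∑ u ∈ Icc 1 (n - 1), a u) + n := by
  rw [stepHeight, Nat.add_sub_cancel_left]

end stepHeight

theorem mem_SBn_stepHeight {n : ℕ} {a : ℕ → ℤ} (ha : a n = 0) {i j : ℕ} (hi : 1 ≤ i)
    (hij : i ≤ j) (hjn : j ≤ n) :
    ((stepHeight n a i + stepHeight n a j - 1 : ℤ) : ℚ) ∈ SBn n a :=
  ⟨i, j, hi, hij, hjn, by simp [stepHeight, ha]; ring⟩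

theorem sum_Icc_one_sub_one_eq {n : ℕ} {a : ℕ → ℤ} (h1 : a 1 = 0) (hn1 : a (n - 1) = 0) :
    ∑ u ∈ Icc 1 (n - 1), a u = ∑ u ∈ Icc 2 (n - 2), a u := by
  refine (sum_subset (fun u hu => ?_) fun u hu hu' => ?_).symm
  · simp only [mem_Icc] at hu ⊢; omega
  · simp only [mem_Icc] at hu hu'
    obtain rfl | rfl : u = 1 ∨ u = n - 1 := by omega
    exacts [h1, hn1]

/-- Corollary 3.15 for `Bₙ/P(αₙ)`: if `a₁ = a_{n-1} = aₙ = 0` and `0 ≤ aᵤ ≤ 1` for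
`2 ≤ u ≤ n-2`, then every integer in `[1, M^B_{n,a} = 2∑_{u=2}^{n-2} aᵤ + 2n - 1]`
is an entry of the step matrix. -/
theorem cor_B_eq (n : ℕ) (hn : 3 ≤ n) (a : ℕ → ℤ)
    (h1 : a 1 = 0) (hn1 : a (n - 1) = 0) (hnn : a n = 0)
    (hb : ∀ u, 2 ≤ u → u ≤ n - 2 → 0 ≤ a u ∧ a u ≤ 1) :
    ∀ l : ℤ, 1 ≤ l →
      l ≤ 2 * (∑ u ∈ Icc 2 (n - 2), a u) + 2 * (n : ℤ) - 1 →
      (l : ℚ) ∈ SBn n a := by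
  intro l hl1 hl2
  have ha_le : ∀ i, 1 ≤ i → i < n → a (n - i) ≤ 1 := fun i hi hin => by
    rcases (by omega : n - i = 1 ∨ n - i = n - 1 ∨ (2 ≤ n - i ∧ n - i ≤ n - 2)) with
      h | h | ⟨h2, h3⟩
    · rw [h, h1]; norm_num
    · rw [h, hn1]; norm_num
    · exact (hb _ h2 h3).2
  have hg1 : stepHeight n a 1 = 1 := stepHeight.one (by omega)
  have hg2 : stepHeight n a 2 = 2 := by
    rw [stepHeight.succ le_rfl (by omega), hg1, hn1]; norm_num
  have hgn : stepHeight n a (n - 1) + 1 = stepHeight n a n := by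
    have h := stepHeight.succ (n := n) (a := a) (i := n - 1) (by omega) (by omega)
    rw [Nat.sub_add_cancel (by omega), Nat.sub_sub_self (by omega), h1] at h
    linarith
  obtain ⟨i, j, hi, hij, hjn, rfl⟩ :=
    exists_eq_add_sub_one_of_step_le_two (stepHeight n a) (n := n) (by omega) hg1 hg2
    hgn (fun i hi hin => by rw [stepHeight.succ hi hin]; linarith [ha_le i hi hin]) hl1
    (by rw [stepHeight.self, sum_Icc_one_sub_one_eq h1 hn1]; omega)
  exact mem_SBn_stepHeight hnn hi hij hjn
end

section
/- (Combinatorial content of Corollary 3.16(1), type C, highest weight supported below k.) Let n ≥ 2 and 2 ≤ k ≤ n, and let a_1,…,a_n be integers with a_u = 0 for all k ≤ u ≤ n and 0 ≤ a_u ≤ 2n−2k+1 for all 1 ≤ u ≤ k−1. Then every integer l with 1 ≤ l ≤ M^C_{k,a} belongs to the step-matrix entry set S^C_{k,a}. -/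
open Finset

/-!
Write `s i = a_{k+1-i} + ⋯ + a_{k-1} + i`. Since `a` vanishes from `k` on, the first two
families of `S^C_{k,a}` for a fixed `i` fill the integers of `[s i, s i + 2(n-k)]` except the
middle one, which is the third family at `i = j`. Consecutive blocks satisfy
`s (i+1) = s i + a_{k-i} + 1`, so the bound `a_{k-i} ≤ 2(n-k)+1` leaves a gap of at most one
integer between them, and that integer is the third family at `(i, i+1)`. The blocks run from
`s 1 = 1` to `s k + 2(n-k) = M^C_{k,a}`.
-/

theorem Icc_subset_of_chained_blocks {S : Set ℤ} {s : ℕ → ℤ} {w : ℤ} {k : ℕ} (hk : 1 ≤ k)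
    (hblock : ∀ i, 1 ≤ i → i ≤ k → Set.Icc (s i) (s i + w) ⊆ S)
    (hstep : ∀ i, 1 ≤ i → i < k → s (i + 1) ≤ s i + w + 2)
    (hgap : ∀ i, 1 ≤ i → i < k → s (i + 1) = s i + w + 2 → s i + w + 1 ∈ S) :
    Set.Icc (s 1) (s k + w) ⊆ S := by
  induction k, hk using Nat.le_induction with
  | base => exact hblock 1 le_rfl le_rfl
  | succ k hk ih =>
    rintro m ⟨hm1, hm2⟩
    by_cases hlow : m ≤ s k + w
    · exact ih (fun i h1 h2 => hblock i h1 (by omega)) (fun i h1 h2 => hstep i h1 (by omega))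
        (fun i h1 h2 => hgap i h1 (by omega)) ⟨hm1, hlow⟩
    by_cases hhigh : s (k + 1) ≤ m
    · exact hblock (k + 1) (by omega) le_rfl ⟨hhigh, hm2⟩
    have hs := hstep k hk (lt_add_one k)
    obtain rfl : m = s k + w + 1 := by omega
    exact hgap k hk (lt_add_one k) (by omega)

theorem sum_Icc_eq_of_eq_zero {M : Type*} [AddCommMonoid M] {f : ℕ → M} {lo hi hi' : ℕ}
    (hle : hi ≤ hi') (hf : ∀ u, hi < u → u ≤ hi' → f u = 0) :
    ∑ u ∈ Icc lo hi', f u = ∑ u ∈ Icc lo hi, f u := by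
  refine (sum_subset (Icc_subset_Icc le_rfl hle) fun u hu hnu => ?_).symm
  simp only [mem_Icc, not_and, not_le] at hu hnu
  exact hf u (hnu hu.1) hu.2

def blockStartC (k : ℕ) (a : ℕ → ℤ) (i : ℕ) : ℤ := ∑ u ∈ Icc (k + 1 - i) (k - 1), a u + i

section

variable {n k : ℕ} {a : ℕ → ℤ}

theorem blockStartC_one (hk : 1 ≤ k) : blockStartC k a 1 = 1 := by
  simp [blockStartC, Icc_eq_empty_of_lt (show k - 1 < k by omega)]

theorem blockStartC_succ {i : ℕ} (hi : 1 ≤ i) (hik : i < k) :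
    blockStartC k a (i + 1) = blockStartC k a i + a (k - i) + 1 := by
  have hIcc : Icc (k + 1 - (i + 1)) (k - 1) = insert (k - i) (Icc (k + 1 - i) (k - 1)) := by
    ext u; simp only [mem_Icc, mem_insert]; omega
  rw [blockStartC, blockStartC, hIcc, sum_insert (by simp only [mem_Icc]; omega)]
  push_cast; ring

theorem sum_Icc_eq_blockStartC_sub (h0 : ∀ u, k ≤ u → u ≤ n → a u = 0) {i hi : ℕ}
    (hk : k - 1 ≤ hi) (hin : hi ≤ n) :
    ∑ u ∈ Icc (k + 1 - i) hi, (a u : ℚ) = blockStartC k a i - i := by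
  rw [sum_Icc_eq_of_eq_zero hk fun u h1 h2 => by simp [h0 u (by omega) (by omega)]]
  simp [blockStartC]

theorem MC_eq_blockStartC (h0 : ∀ u, k ≤ u → u ≤ n → a u = 0) (hk : 1 ≤ k) (hkn : k ≤ n) :
    MC n k a = blockStartC k a k + 2 * ((n : ℤ) - k) := by
  have hhead : ∑ u ∈ Icc 1 (n - 1), a u = ∑ u ∈ Icc 1 (k - 1), a u :=
    sum_Icc_eq_of_eq_zero (by omega) fun u h1 h2 => h0 u (by omega) (by omega)
  have htail : ∑ u ∈ Icc (k + 1) (n - 1), a u = 0 :=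
    sum_eq_zero fun u hu => by simp only [mem_Icc] at hu; exact h0 u (by omega) (by omega)
  rw [MC, blockStartC, hhead, htail, h0 n hkn le_rfl, show k + 1 - k = 1 by omega]
  ring

theorem mem_SC_of_lt_middle (h0 : ∀ u, k ≤ u → u ≤ n → a u = 0) {i j : ℕ} {m : ℤ}
    (hi : 1 ≤ i) (hik : i ≤ k) (hj : 1 ≤ j) (hjn : j ≤ n - k)
    (hm : m = blockStartC k a i + j - 1) : (m : ℚ) ∈ SC n k a := by
  refine Or.inl (Or.inl ⟨i, j, hi, hik, hj, hjn, ?_⟩)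
  rw [sum_Icc_eq_blockStartC_sub h0 (by omega) (by omega), hm]
  push_cast; ring

theorem mem_SC_of_gt_middle (h0 : ∀ u, k ≤ u → u ≤ n → a u = 0) {i j : ℕ} {m : ℤ}
    (hi : 1 ≤ i) (hik : i ≤ k) (hj : 1 ≤ j) (hjn : j ≤ n - k)
    (hm : m = blockStartC k a i + ((n : ℤ) - k) + j) : (m : ℚ) ∈ SC n k a := by
  have hzero : ∑ u ∈ Icc (n + 1 - j) (n - 1), (a u : ℚ) = 0 :=
    sum_eq_zero fun u hu => by
      simp only [mem_Icc] at hu; simp [h0 u (by omega) (by omega)]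
  refine Or.inl (Or.inr ⟨i, j, hi, hik, hj, hjn, ?_⟩)
  rw [sum_Icc_eq_blockStartC_sub h0 (by omega) (by omega), hzero, h0 n (by omega) le_rfl, hm]
  push_cast; ring

theorem mem_SC_of_two_mul_eq (h0 : ∀ u, k ≤ u → u ≤ n → a u = 0) {i j : ℕ} {m : ℤ}
    (hi : 1 ≤ i) (hij : i ≤ j) (hjk : j ≤ k) (hkn : k ≤ n)
    (hm : 2 * m = blockStartC k a i + blockStartC k a j + 2 * ((n : ℤ) - k)) :
    (m : ℚ) ∈ SC n k a := by
  have hm' : 2 * (m : ℚ) = blockStartC k a i + blockStartC k a j + 2 * ((n : ℚ) - k) := by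
    exact_mod_cast hm
  refine Or.inr ⟨i, j, hi, hij, hjk, ?_⟩
  rw [sum_Icc_eq_blockStartC_sub h0 (by omega) (by omega),
    sum_Icc_eq_blockStartC_sub h0 (by omega) (by omega), h0 n hkn le_rfl]
  push_cast; linarith

theorem mem_SC_of_mem_block (h0 : ∀ u, k ≤ u → u ≤ n → a u = 0) {i : ℕ} (hi : 1 ≤ i)
    (hik : i ≤ k) (hkn : k ≤ n) {m : ℤ}
    (hm : m ∈ Set.Icc (blockStartC k a i) (blockStartC k a i + 2 * ((n : ℤ) - k))) :
    (m : ℚ) ∈ SC n k a := by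
  obtain ⟨hm1, hm2⟩ := hm
  rcases lt_trichotomy m (blockStartC k a i + ((n : ℤ) - k)) with h | h | h
  · obtain ⟨j, hj⟩ : ∃ j : ℕ, (j : ℤ) = m - blockStartC k a i + 1 :=
      ⟨_, Int.toNat_of_nonneg (by omega)⟩
    exact mem_SC_of_lt_middle (j := j) h0 hi hik (by omega) (by omega) (by omega)
  · exact mem_SC_of_two_mul_eq h0 hi le_rfl hik hkn (by omega)
  · obtain ⟨j, hj⟩ : ∃ j : ℕ, (j : ℤ) = m - blockStartC k a i - ((n : ℤ) - k) :=
      ⟨_, Int.toNat_of_nonneg (by omega)⟩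
    exact mem_SC_of_gt_middle (j := j) h0 hi hik (by omega) (by omega) (by omega)

end

theorem cor_C_support_below_general (n k : ℕ) (hk1 : 2 ≤ k) (hkn : k ≤ n)
    (a : ℕ → ℤ) (h0 : ∀ u, k ≤ u → u ≤ n → a u = 0)
    (hb : ∀ u, 1 ≤ u → u ≤ k - 1 →
      0 ≤ a u ∧ a u ≤ 2 * (n : ℤ) - 2 * (k : ℤ) + 1) :
    ∀ l : ℤ, 1 ≤ l → l ≤ MC n k a → (l : ℚ) ∈ SC n k a := by
  intro l hl1 hl2
  have hcover := Icc_subset_of_chained_blocks (S := Int.cast ⁻¹' SC n k a)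
    (s := blockStartC k a) (w := 2 * ((n : ℤ) - k)) (k := k) (by omega)
    (fun i hi hik m hm => mem_SC_of_mem_block h0 hi hik hkn hm)
    (fun i hi hik => by
      rw [blockStartC_succ hi hik]; linarith [(hb (k - i) (by omega) (by omega)).2])
    (fun i hi hik hgap => mem_SC_of_two_mul_eq (j := i + 1) h0 hi (by omega) hik hkn (by omega))
  rw [blockStartC_one (by omega), ← MC_eq_blockStartC h0 (by omega) hkn] at hcover
  exact hcover ⟨hl1, hl2⟩

/-- Corollary 3.16(1) for `Cₙ/P(α_k)`: if the highest weight is supported below `k`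
with coefficients at most `2n-2k+1`, then every integer in `[1, M^C_{k,a}]` is an
entry of the step matrix. -/
theorem cor_C_support_below (n k : ℕ) (hn : 2 ≤ n) (hk1 : 2 ≤ k) (hkn : k ≤ n)
    (a : ℕ → ℤ) (h0 : ∀ u, k ≤ u → u ≤ n → a u = 0)
    (hb : ∀ u, 1 ≤ u → u ≤ k - 1 →
      0 ≤ a u ∧ a u ≤ 2 * (n : ℤ) - 2 * (k : ℤ) + 1) :
    ∀ l : ℤ, 1 ≤ l → l ≤ MC n k a → (l : ℚ) ∈ SC n k a :=
  cor_C_support_below_general n k hk1 hkn a h0 hb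
end

section
/- (Combinatorial content of Corollary 3.16(2), type C, highest weight supported above k.) Let n ≥ 3 and 2 ≤ k ≤ n−1, and let a_1,…,a_n be nonnegative integers with a_u = 0 for all 1 ≤ u ≤ k. Then every integer l with 1 ≤ l ≤ M^C_{k,a} belongs to the step-matrix entry set S^C_{k,a} if and only if a_i ≤ k−1 for all k+1 ≤ i ≤ n. -/
open Finset

theorem exists_le_lt_add_of_forall_succ_le {s : ℕ → ℤ} {c : ℤ} {N : ℕ}
    (hstep : ∀ j < N, s (j + 1) ≤ s j + c) {l : ℤ} (hl₀ : s 0 ≤ l) (hlN : l < s N + c) :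
    ∃ j ≤ N, s j ≤ l ∧ l < s j + c := by
  induction N with
  | zero => exact ⟨0, le_rfl, hl₀, hlN⟩
  | succ N ih =>
    by_cases hl : s (N + 1) ≤ l
    · exact ⟨N + 1, le_rfl, hl, hlN⟩
    · obtain ⟨j, hj, hjl⟩ :=
        ih (fun j hj => hstep j (by omega)) (by linarith [hstep N (by omega)])
      exact ⟨j, by omega, hjl⟩

theorem forall_exists_le_lt_add_iff {s : ℕ → ℤ} {c : ℤ} {N : ℕ} (hc : 0 ≤ c)
    (hs : ∀ j < N, s j ≤ s (j + 1)) :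
    (∀ l, s 0 ≤ l → l < s N + c → ∃ j ≤ N, s j ≤ l ∧ l < s j + c) ↔
      ∀ j < N, s (j + 1) ≤ s j + c := by
  refine ⟨fun hcover => ?_, fun hstep l => exists_le_lt_add_of_forall_succ_le hstep⟩
  by_contra! ⟨J, hJN, hgap⟩
  have hmono : MonotoneOn s (Set.Iic N) :=
    monotoneOn_of_le_add_one Set.ordConnected_Iic fun j _ _ hj => hs j hj
  have hle {i j : ℕ} (hij : i ≤ j) (hj : j ≤ N) : s i ≤ s j :=
    hmono (Set.mem_Iic.2 (hij.trans hj)) (Set.mem_Iic.2 hj) hij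
  -- the integer `s J + c` falls into the gap between the blocks `J` and `J + 1`
  obtain ⟨j, hj, hjl, hlj⟩ := hcover (s J + c) (by linarith [hle (Nat.zero_le J) hJN.le])
    (by linarith [hle (Nat.succ_le_of_lt hJN) le_rfl])
  rcases le_or_gt j J with hjJ | hjJ
  · linarith [hle hjJ hJN.le]
  · linarith [hle (Nat.succ_le_of_lt hjJ) hj]

theorem sum_Icc_sub_eq_sum_Icc {M : Type*} [AddCommMonoid M] {f : ℕ → M} {k i : ℕ}
    (hf : ∀ u, 1 ≤ u → u ≤ k → f u = 0) (hi : i ≤ k) (m : ℕ) :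
    ∑ u ∈ Icc (k + 1 - i) m, f u = ∑ u ∈ Icc (k + 1) m, f u :=
  (sum_subset (Icc_subset_Icc_left (by omega)) fun u hu hu' => by
    simp only [mem_Icc] at hu hu'
    exact hf u (by omega) (by omega)).symm

theorem sum_Icc_eq_sum_Icc_sub_one_add {M : Type*} [AddCommMonoid M] (f : ℕ → M) {c m : ℕ}
    (hm : 1 ≤ m) (hcm : c ≤ m) : ∑ u ∈ Icc c m, f u = ∑ u ∈ Icc c (m - 1), f u + f m := by
  obtain ⟨m, rfl⟩ : ∃ m', m = m' + 1 := ⟨m - 1, by omega⟩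
  simpa using sum_Icc_succ_top hcm f

/-- The `j`-th block of integer entries of the step matrix is `[blockStart j, blockStart j + k)`:
the columns of the first kind give `j < n - k`, the diagonal of the third kind `j = n - k`, and the
columns of the second kind `j > n - k`. -/
def blockStart (n k : ℕ) (a : ℕ → ℤ) (j : ℕ) : ℤ :=
  if j ≤ n - k then (∑ u ∈ Icc (k + 1) (k + j), a u) + j + 1
  else (∑ u ∈ Icc (k + 1) n, a u) + (∑ u ∈ Icc (2 * n - k + 1 - j) n, a u) + j + 1

section blockStart

variable {n k : ℕ} {a : ℕ → ℤ}

theorem blockStart_of_le_sub {j : ℕ} (hj : j ≤ n - k) :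
    blockStart n k a j = (∑ u ∈ Icc (k + 1) (k + j), a u) + j + 1 :=
  if_pos hj

theorem blockStart_of_sub_le (hkn : k ≤ n) {j : ℕ} (hj : n - k ≤ j) :
    blockStart n k a j =
      (∑ u ∈ Icc (k + 1) n, a u) + (∑ u ∈ Icc (2 * n - k + 1 - j) n, a u) + j + 1 := by
  unfold blockStart
  split_ifs with h
  · obtain rfl : j = n - k := by omega
    rw [show k + (n - k) = n by omega,
      Icc_eq_empty (show ¬ 2 * n - k + 1 - (n - k) ≤ n by omega), sum_empty, add_zero]
  · rfl

theorem blockStart_zero : blockStart n k a 0 = 1 := by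
  simp [blockStart]

theorem blockStart_succ (hkn : k ≤ n) {j : ℕ} (hj : j < 2 * (n - k)) :
    blockStart n k a (j + 1) = blockStart n k a j + a (min (k + 1 + j) (2 * n - k - j)) + 1 := by
  rcases lt_or_ge j (n - k) with h | h
  · rw [blockStart_of_le_sub h.le, blockStart_of_le_sub (j := j + 1) h, ← add_assoc,
      sum_Icc_succ_top (by omega), min_eq_left (by omega), Nat.add_right_comm k 1 j]
    push_cast
    ring
  · rw [blockStart_of_sub_le hkn (by omega), blockStart_of_sub_le hkn h, min_eq_right (by omega),
      ← insert_Icc_add_one_left_eq_Icc (show 2 * n - k + 1 - (j + 1) ≤ n by omega),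
      sum_insert (by simp), show 2 * n - k + 1 - (j + 1) + 1 = 2 * n - k + 1 - j by omega,
      show 2 * n - k + 1 - (j + 1) = 2 * n - k - j by omega]
    push_cast
    ring

theorem blockStart_le_succ (hkn : k ≤ n) (ha : ∀ u, 1 ≤ u → u ≤ n → 0 ≤ a u) :
    ∀ j < 2 * (n - k), blockStart n k a j ≤ blockStart n k a (j + 1) := by
  intro j hj
  rw [blockStart_succ hkn hj]
  linarith [ha (min (k + 1 + j) (2 * n - k - j)) (by omega) (by omega)]

theorem forall_blockStart_succ_le_iff (hkn : k ≤ n) :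
    (∀ j < 2 * (n - k), blockStart n k a (j + 1) ≤ blockStart n k a j + k) ↔
      ∀ i, k + 1 ≤ i → i ≤ n → a i ≤ (k : ℤ) - 1 := by
  constructor
  · intro hstep i hi hin
    have := hstep (i - (k + 1)) (by omega)
    rw [blockStart_succ hkn (by omega),
      show min (k + 1 + (i - (k + 1))) (2 * n - k - (i - (k + 1))) = i by omega] at this
    linarith
  · intro hbound j hj
    rw [blockStart_succ hkn hj]
    linarith [hbound (min (k + 1 + j) (2 * n - k - j)) (by omega) (by omega)]

theorem blockStart_two_mul_sub_add (hkn : k < n) (h0 : ∀ u, 1 ≤ u → u ≤ k → a u = 0) :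
    blockStart n k a (2 * (n - k)) + k = MC n k a + 1 := by
  have hsum := sum_Icc_sub_eq_sum_Icc h0 le_rfl (n - 1)
  rw [show k + 1 - k = 1 by omega] at hsum
  rw [blockStart_of_sub_le hkn.le (by omega), show 2 * n - k + 1 - 2 * (n - k) = k + 1 by omega,
    MC, hsum, sum_Icc_eq_sum_Icc_sub_one_add a (by omega) (by omega : k + 1 ≤ n)]
  push_cast [Nat.cast_sub hkn.le]
  ring

theorem typeOne_entry_eq (h0 : ∀ u, 1 ≤ u → u ≤ k → a u = 0) {i j : ℕ} (hi : i ≤ k)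
    (hj : 1 ≤ j) (hjn : j ≤ n - k) :
    (∑ u ∈ Icc (k + 1 - i) (k + j - 1), (a u : ℚ)) + i + j - 1 =
      ((blockStart n k a (j - 1) + i - 1 : ℤ) : ℚ) := by
  rw [sum_Icc_sub_eq_sum_Icc (fun u h1 h2 => by simp [h0 u h1 h2]) hi,
    blockStart_of_le_sub (by omega), show k + (j - 1) = k + j - 1 by omega]
  push_cast [Nat.cast_sub hj]
  ring

theorem typeTwo_entry_eq (hkn : k ≤ n) (h0 : ∀ u, 1 ≤ u → u ≤ k → a u = 0) {i j : ℕ}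
    (hi : i ≤ k) (hj : 1 ≤ j) (hjn : j ≤ n - k) :
    (∑ u ∈ Icc (k + 1 - i) (n - 1), (a u : ℚ)) + (∑ u ∈ Icc (n + 1 - j) (n - 1), (a u : ℚ))
        + 2 * (a n : ℚ) + n - k + i + j =
      ((blockStart n k a (n - k + j) + i - 1 : ℤ) : ℚ) := by
  rw [sum_Icc_sub_eq_sum_Icc (fun u h1 h2 => by simp [h0 u h1 h2]) hi,
    blockStart_of_sub_le hkn (by omega), show 2 * n - k + 1 - (n - k + j) = n + 1 - j by omega,
    sum_Icc_eq_sum_Icc_sub_one_add a (c := k + 1) (by omega) (by omega),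
    sum_Icc_eq_sum_Icc_sub_one_add a (c := n + 1 - j) (by omega) (by omega)]
  push_cast [Nat.cast_sub hkn]
  ring

theorem typeThree_entry_eq (hkn : k < n) (h0 : ∀ u, 1 ≤ u → u ≤ k → a u = 0) {i j : ℕ}
    (hi : i ≤ k) (hj : j ≤ k) :
    ((∑ u ∈ Icc (k + 1 - i) (n - 1), (a u : ℚ)) + (∑ u ∈ Icc (k + 1 - j) (n - 1), (a u : ℚ))
        + 2 * (a n : ℚ) + i + j + 2 * n - 2 * k) / 2 =
      ((blockStart n k a (n - k) - 1 : ℤ) : ℚ) + (i + j) / 2 := by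
  have h0' : ∀ u, 1 ≤ u → u ≤ k → (a u : ℚ) = 0 := fun u h1 h2 => by simp [h0 u h1 h2]
  rw [sum_Icc_sub_eq_sum_Icc h0' hi, sum_Icc_sub_eq_sum_Icc h0' hj,
    blockStart_of_le_sub le_rfl, show k + (n - k) = n by omega,
    sum_Icc_eq_sum_Icc_sub_one_add a (by omega) (by omega : k + 1 ≤ n)]
  push_cast [Nat.cast_sub hkn.le]
  ring

theorem intCast_mem_SC_iff (hkn : k < n) (h0 : ∀ u, 1 ≤ u → u ≤ k → a u = 0) (l : ℤ) :
    (l : ℚ) ∈ SC n k a ↔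
      ∃ j ≤ 2 * (n - k), blockStart n k a j ≤ l ∧ l < blockStart n k a j + k := by
  simp only [SC, Set.mem_union, Set.mem_ofPred_eq]
  constructor
  · rintro ((⟨i, j, hi, hik, hj, hjn, hl⟩ | ⟨i, j, hi, hik, hj, hjn, hl⟩) |
      ⟨i, j, hi, hij, hjk, hl⟩)
    · rw [typeOne_entry_eq h0 hik hj hjn] at hl
      have hl : l = blockStart n k a (j - 1) + i - 1 := by exact_mod_cast hl
      exact ⟨j - 1, by omega, by omega, by omega⟩
    · rw [typeTwo_entry_eq hkn.le h0 hik hj hjn] at hl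
      have hl : l = blockStart n k a (n - k + j) + i - 1 := by exact_mod_cast hl
      exact ⟨n - k + j, by omega, by omega, by omega⟩
    · rw [typeThree_entry_eq hkn h0 (hij.trans hjk) hjk] at hl
      have hl : 2 * (l - blockStart n k a (n - k) + 1) = i + j := by
        have : (2 * (l - blockStart n k a (n - k) + 1) : ℚ) = i + j := by
          rw [hl]; push_cast; ring
        exact_mod_cast this
      exact ⟨n - k, by omega, by omega, by omega⟩
  · rintro ⟨j, hjN, hlj, hlt⟩
    obtain ⟨t, ht⟩ := Int.eq_ofNat_of_zero_le (sub_nonneg.2 hlj)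
    rw [show l = blockStart n k a j + t by omega]
    rcases lt_trichotomy j (n - k) with hj | rfl | hj
    · refine Or.inl (Or.inl ⟨t + 1, j + 1, by omega, by omega, by omega, by omega, ?_⟩)
      rw [typeOne_entry_eq (n := n) h0 (by omega) (by omega) (by omega), Nat.add_sub_cancel]
      push_cast
      ring
    · refine Or.inr ⟨t + 1, t + 1, by omega, le_rfl, by omega, ?_⟩
      rw [typeThree_entry_eq hkn h0 (by omega) (by omega)]
      push_cast
      ring
    · refine Or.inl (Or.inr ⟨t + 1, j - (n - k), by omega, by omega, by omega, by omega, ?_⟩)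
      rw [typeTwo_entry_eq hkn.le h0 (by omega) (by omega) (by omega),
        show n - k + (j - (n - k)) = j by omega]
      push_cast
      ring

end blockStart

theorem cor_C_support_above_general (n k : ℕ) (hn : 3 ≤ n) (hkn : k ≤ n - 1)
    (a : ℕ → ℤ) (ha : ∀ u, 1 ≤ u → u ≤ n → 0 ≤ a u)
    (h0 : ∀ u, 1 ≤ u → u ≤ k → a u = 0) :
    (∀ l : ℤ, 1 ≤ l → l ≤ MC n k a → (l : ℚ) ∈ SC n k a) ↔
      (∀ i, k + 1 ≤ i → i ≤ n → a i ≤ (k : ℤ) - 1) := by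
  have hk : k < n := by omega
  calc (∀ l : ℤ, 1 ≤ l → l ≤ MC n k a → (l : ℚ) ∈ SC n k a)
      ↔ ∀ l, blockStart n k a 0 ≤ l → l < blockStart n k a (2 * (n - k)) + k →
          ∃ j ≤ 2 * (n - k), blockStart n k a j ≤ l ∧ l < blockStart n k a j + k := by
        simp only [blockStart_zero, blockStart_two_mul_sub_add hk h0, Int.lt_add_one_iff,
          intCast_mem_SC_iff hk h0]
    _ ↔ ∀ j < 2 * (n - k), blockStart n k a (j + 1) ≤ blockStart n k a j + k :=
        forall_exists_le_lt_add_iff (Nat.cast_nonneg k) (blockStart_le_succ hk.le ha)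
    _ ↔ ∀ i, k + 1 ≤ i → i ≤ n → a i ≤ (k : ℤ) - 1 := forall_blockStart_succ_le_iff hk.le

/-- Corollary 3.16(2) for `Cₙ/P(α_k)`: for a highest weight supported above `k`,
every integer in `[1, M^C_{k,a}]` is an entry of the step matrix iff
`a_i ≤ k-1` for `k+1 ≤ i ≤ n`. -/
theorem cor_C_support_above (n k : ℕ) (hn : 3 ≤ n) (hk1 : 2 ≤ k) (hkn : k ≤ n - 1)
    (a : ℕ → ℤ) (ha : ∀ u, 1 ≤ u → u ≤ n → 0 ≤ a u)
    (h0 : ∀ u, 1 ≤ u → u ≤ k → a u = 0) :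
    (∀ l : ℤ, 1 ≤ l → l ≤ MC n k a → (l : ℚ) ∈ SC n k a) ↔
      (∀ i, k + 1 ≤ i → i ≤ n → a i ≤ (k : ℤ) - 1) :=
  cor_C_support_above_general n k hn hkn a ha h0
end
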